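/- arXiv:2405.19352 — 9 statements merged into one kernel-verified Lean document; each statement's English description precedes it below -/
import Mathlib

section
/- For every positive integer n, the number of subsets E of {1,...,n} that are either empty or satisfy ω_n(E) < min E (where ω_n(E) counts the elements of E other than n) equals 2F_n, where F_n is the n-th Fibonacci number (F_0=0, F_1=1). -/
open Finset

private def Sn (m : ℕ) : Finset (Finset ℕ) :=
  (Finset.Icc 1 m).powerset.filter (fun E => ∀ x ∈ E, E.card < x)

private lemma Sn_card : ∀ m : ℕ, (Sn m).card = Nat.fib (m + 1)
  | 0 => by decide
  | 1 => by decide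
  | (m+2) => by
    have h1 : (Sn (m+1)).card = Nat.fib (m+2) := Sn_card (m+1)
    have h0 := Sn_card m
    have hsplit := Finset.card_filter_add_card_filter_not
      (s := Sn (m+2)) (p := fun E => (m+2) ∈ E)
    have hA : ((Sn (m+2)).filter (fun E => ¬ (m+2) ∈ E)) = Sn (m+1) := by
      ext E
      simp only [Sn, mem_filter, mem_powerset]
      constructor
      · rintro ⟨⟨hsub, hP⟩, hnot⟩
        refine ⟨fun x hx => ?_, hP⟩
        have := hsub hx
        simp only [mem_Icc] at this ⊢
        have : x ≠ m + 2 := fun h => hnot (h ▸ hx)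
        omega
      · rintro ⟨hsub, hP⟩
        have hnot : (m+2) ∉ E := fun h => by
          have := hsub h; simp only [mem_Icc] at this; omega
        refine ⟨⟨fun x hx => ?_, hP⟩, hnot⟩
        have := hsub hx
        simp only [mem_Icc] at this ⊢
        omega
    have hB : ((Sn (m+2)).filter (fun E => (m+2) ∈ E)).card = (Sn m).card := by
      symm
      apply Finset.card_bij (fun F _ => insert (m+2) (F.image (· + 1)))
      · intro F hF
        simp only [Sn, mem_filter, mem_powerset] at hF ⊢
        obtain ⟨hsub, hP⟩ := hF
        have hnotmem : (m+2) ∉ F.image (· + 1) := by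
          simp only [mem_image]
          rintro ⟨y, hy, hy2⟩
          have := hsub hy; simp only [mem_Icc] at this; omega
        have hcard : (insert (m+2) (F.image (· + 1))).card = F.card + 1 := by
          rw [card_insert_of_notMem hnotmem,
            Finset.card_image_of_injective _ (add_left_injective 1)]
        have hFcard : F.card ≤ m := by
          calc F.card ≤ (Finset.Icc 1 m).card := Finset.card_le_card hsub
          _ = m := by simp
        refine ⟨⟨fun x hx => ?_, fun x hx => ?_⟩, mem_insert_self _ _⟩
        · rcases mem_insert.1 hx with h | h
          · simp only [h, mem_Icc]; omega
          · simp only [mem_image] at h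
            obtain ⟨y, hy, rfl⟩ := h
            have := hsub hy; simp only [mem_Icc] at this ⊢; omega
        · rw [hcard]
          rcases mem_insert.1 hx with h | h
          · omega
          · simp only [mem_image] at h
            obtain ⟨y, hy, rfl⟩ := h
            have := hP y hy; omega
      · intro F hF G hG h
        have hnF : (m+2) ∉ F.image (· + 1) := by
          simp only [Sn, mem_filter, mem_powerset] at hF
          simp only [mem_image]
          rintro ⟨y, hy, hy2⟩
          have := hF.1 hy; simp only [mem_Icc] at this; omega
        have hnG : (m+2) ∉ G.image (· + 1) := by
          simp only [Sn, mem_filter, mem_powerset] at hG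
          simp only [mem_image]
          rintro ⟨y, hy, hy2⟩
          have := hG.1 hy; simp only [mem_Icc] at this; omega
        have : F.image (· + 1) = G.image (· + 1) := by
          have := congrArg (fun s => Finset.erase s (m+2)) h
          simpa [Finset.erase_insert hnF, Finset.erase_insert hnG] using this
        exact Finset.image_injective (add_left_injective 1) this
      · intro E hE
        simp only [mem_filter] at hE
        obtain ⟨hE', hmem⟩ := hE
        simp only [Sn, mem_filter, mem_powerset] at hE'
        obtain ⟨hsub, hP⟩ := hE'
        have hge2 : ∀ x ∈ E.erase (m+2), 2 ≤ x := by
          intro x hx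
          have hxE := Finset.mem_of_mem_erase hx
          have h1 := hP x hxE
          have : 1 ≤ E.card := Finset.card_pos.2 ⟨m+2, hmem⟩
          omega
        refine ⟨(E.erase (m+2)).image (· - 1), ?_, ?_⟩
        · simp only [Sn, mem_filter, mem_powerset]
          have hcard : ((E.erase (m+2)).image (· - 1)).card = E.card - 1 := by
            rw [Finset.card_image_of_injOn, Finset.card_erase_of_mem hmem]
            intro a ha b hb hab
            have hab' : a - 1 = b - 1 := hab
            have := hge2 a ha; have := hge2 b hb
            omega
          constructor
          · intro x hx
            simp only [mem_image] at hx
            obtain ⟨y, hy, rfl⟩ := hx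
            have h2 := hge2 y hy
            have hyE := Finset.mem_of_mem_erase hy
            have hyne := Finset.ne_of_mem_erase hy
            have := hsub hyE; simp only [mem_Icc] at this ⊢
            omega
          · intro x hx
            simp only [mem_image] at hx
            obtain ⟨y, hy, rfl⟩ := hx
            rw [hcard]
            have := hP y (Finset.mem_of_mem_erase hy)
            have := hge2 y hy
            omega
        · have himg : ((E.erase (m+2)).image (· - 1)).image (· + 1) = E.erase (m+2) := by
            ext z
            simp only [Finset.mem_image]
            constructor
            · rintro ⟨y, ⟨w, hw, hyw⟩, hz⟩
              have h2 := hge2 w hw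
              have : z = w := by omega
              rwa [this]
            · intro hz
              exact ⟨z - 1, ⟨z, hz, rfl⟩, by have := hge2 z hz; omega⟩
          rw [himg, Finset.insert_erase hmem]
    have hfib : Nat.fib (m + 2 + 1) = Nat.fib (m + 1) + Nat.fib (m + 2) := Nat.fib_add_two
    rw [hA] at hsplit
    omega

/-- For every positive integer `n`, the number of subsets `E` of `{1,...,n}` that are
either empty or satisfy `ω_n(E) < min E` equals `2 * F n`. -/
theorem stmt0 (n : ℕ) (hn : 1 ≤ n) :
    {E : Finset ℕ | E ⊆ Finset.Icc 1 n ∧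
      (E = ∅ ∨ ∃ h : E.Nonempty, (E.erase n).card < E.min' h)}.ncard
      = 2 * Nat.fib n := by
  classical
  have hset : {E : Finset ℕ | E ⊆ Finset.Icc 1 n ∧
      (E = ∅ ∨ ∃ h : E.Nonempty, (E.erase n).card < E.min' h)}
      = ↑((Finset.Icc 1 n).powerset.filter (fun E => ∀ x ∈ E, (E.erase n).card < x)) := by
    ext E
    simp only [Set.mem_setOf_eq, coe_filter, mem_powerset]
    constructor
    · rintro ⟨hsub, hcond⟩
      refine ⟨hsub, fun x hx => ?_⟩
      rcases hcond with rfl | ⟨h, hlt⟩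
      · exact absurd hx (Finset.notMem_empty x)
      · exact lt_of_lt_of_le hlt (Finset.min'_le E x hx)
    · rintro ⟨hsub, hcond⟩
      refine ⟨hsub, ?_⟩
      rcases E.eq_empty_or_nonempty with rfl | hne
      · exact Or.inl rfl
      · exact Or.inr ⟨hne, hcond _ (E.min'_mem hne)⟩
  rw [hset, Set.ncard_coe_finset]
  set T := (Finset.Icc 1 n).powerset.filter (fun E => ∀ x ∈ E, (E.erase n).card < x) with hT
  have hsplit := Finset.card_filter_add_card_filter_not
    (s := T) (p := fun E => n ∈ E)
  have hA : (T.filter (fun E => ¬ n ∈ E)) = Sn (n-1) := by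
    ext E
    simp only [hT, Sn, mem_filter, mem_powerset]
    constructor
    · rintro ⟨⟨hsub, hP⟩, hnot⟩
      constructor
      · intro x hx
        have := hsub hx; simp only [mem_Icc] at this ⊢
        have : x ≠ n := fun h => hnot (h ▸ hx)
        omega
      · intro x hx
        have := hP x hx
        rwa [Finset.erase_eq_of_notMem hnot] at this
    · rintro ⟨hsub, hP⟩
      have hnot : n ∉ E := fun h => by
        have := hsub h; simp only [mem_Icc] at this; omega
      refine ⟨⟨fun x hx => ?_, fun x hx => ?_⟩, hnot⟩
      · have := hsub hx; simp only [mem_Icc] at this ⊢; omega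
      · rw [Finset.erase_eq_of_notMem hnot]; exact hP x hx
  have hB : (T.filter (fun E => n ∈ E)).card = (Sn (n-1)).card := by
    symm
    apply Finset.card_bij (fun F _ => insert n F)
    · intro F hF
      simp only [Sn, mem_filter, mem_powerset] at hF
      obtain ⟨hsub, hP⟩ := hF
      have hnot : n ∉ F := fun h => by
        have := hsub h; simp only [mem_Icc] at this; omega
      have hFcard : F.card ≤ n - 1 := by
        calc F.card ≤ (Finset.Icc 1 (n-1)).card := Finset.card_le_card hsub
        _ = n - 1 := by simp
      simp only [hT, mem_filter, mem_powerset]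
      refine ⟨⟨fun x hx => ?_, fun x hx => ?_⟩, mem_insert_self _ _⟩
      · rcases mem_insert.1 hx with rfl | h
        · simp only [mem_Icc]; omega
        · have := hsub h; simp only [mem_Icc] at this ⊢; omega
      · rw [Finset.erase_insert hnot]
        rcases mem_insert.1 hx with rfl | h
        · omega
        · exact hP x h
    · intro F hF G hG h
      have hnF : n ∉ F := fun hm => by
        simp only [Sn, mem_filter, mem_powerset] at hF
        have := hF.1 hm; simp only [mem_Icc] at this; omega
      have hnG : n ∉ G := fun hm => by
        simp only [Sn, mem_filter, mem_powerset] at hG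
        have := hG.1 hm; simp only [mem_Icc] at this; omega
      have := congrArg (fun s => Finset.erase s n) h
      simpa [Finset.erase_insert hnF, Finset.erase_insert hnG] using this
    · intro E hE
      simp only [hT, mem_filter, mem_powerset] at hE
      obtain ⟨⟨hsub, hP⟩, hmem⟩ := hE
      refine ⟨E.erase n, ?_, Finset.insert_erase hmem⟩
      simp only [Sn, mem_filter, mem_powerset]
      constructor
      · intro x hx
        have hxE := Finset.mem_of_mem_erase hx
        have hxn := Finset.ne_of_mem_erase hx
        have := hsub hxE; simp only [mem_Icc] at this ⊢; omega
      · intro x hx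
        exact hP x (Finset.mem_of_mem_erase hx)
  have hcard : (Sn (n-1)).card = Nat.fib n := by
    rw [Sn_card]
    congr 1
    omega
  rw [hA] at hsplit
  omega
end

section
/- For positive integers k and n with n > max(k, 2), the counts satisfy the recurrence a_{k,n} = a_{k,n-1} + a_{k-1,n-2}. -/
/-- `a k n` counts subsets of `{1,...,n}` that are empty or satisfy `ω_k(E) < min E`. -/
noncomputable def a (k n : ℕ) : ℕ :=
  {E : Finset ℕ | E ⊆ Finset.Icc 1 n ∧
    (E = ∅ ∨ ∃ h : E.Nonempty, (E.erase k).card < E.min' h)}.ncard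

/-!
Split the admissible subsets of `{1,…,n}` according to whether they contain `n`. Those that do
not are exactly the admissible subsets of `{1,…,n-1}`. If `n ∈ E` then `n ∈ ω_k(E)` (as `k < n`),
so every element of `E` is at least `2`, and `E = {n} ∪ (F + 1)` for a unique `F ⊆ {1,…,n-2}`;
since `ω_k(E) = ω_{k-1}(F) + 1` and `min E = min F + 1`, the set `E` is admissible for `k` exactly
when `F` is admissible for `k - 1`.
-/

open Finset

/-- `ω_k(E) < min E`, stated so that it holds vacuously for `E = ∅`. -/
def IsAdmissible (k : ℕ) (E : Finset ℕ) : Prop := ∀ x ∈ E, #(E.erase k) < x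

instance (k : ℕ) : DecidablePred (IsAdmissible k) := fun E => by
  unfold IsAdmissible; infer_instance

def admissibleSets (k n : ℕ) : Finset (Finset ℕ) :=
  (Icc 1 n).powerset.filter (IsAdmissible k)

lemma mem_admissibleSets {k n : ℕ} {E : Finset ℕ} :
    E ∈ admissibleSets k n ↔ E ⊆ Icc 1 n ∧ IsAdmissible k E := by
  rw [admissibleSets, mem_filter, mem_powerset]

lemma isAdmissible_iff_empty_or_card_erase_lt_min' (k : ℕ) (E : Finset ℕ) :
    IsAdmissible k E ↔ E = ∅ ∨ ∃ h : E.Nonempty, #(E.erase k) < E.min' h := by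
  rcases E.eq_empty_or_nonempty with rfl | hE
  · simp [IsAdmissible]
  · simp only [hE.ne_empty, false_or, exists_prop_of_true hE, lt_min'_iff, IsAdmissible]

lemma a_eq_card_admissibleSets (k n : ℕ) : a k n = #(admissibleSets k n) := by
  rw [a, ← Set.ncard_coe_finset]
  congr 1
  ext E
  simp only [mem_coe, mem_admissibleSets, isAdmissible_iff_empty_or_card_erase_lt_min']
  rfl

lemma filter_notMem_admissibleSets (k n : ℕ) :
    (admissibleSets k (n + 1)).filter (fun E => n + 1 ∉ E) = admissibleSets k n := by
  ext E
  simp only [mem_filter, mem_admissibleSets, subset_iff, mem_Icc]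
  constructor
  · rintro ⟨⟨hE, hadm⟩, hn⟩
    refine ⟨fun x hx => ⟨(hE hx).1, ?_⟩, hadm⟩
    have := hE hx
    have : x ≠ n + 1 := fun h => hn (h ▸ hx)
    omega
  · rintro ⟨hE, hadm⟩
    exact ⟨⟨fun x hx => ⟨(hE hx).1, (hE hx).2.trans n.le_succ⟩, hadm⟩,
      fun hn => by have := hE hn; omega⟩

def insertShift (m : ℕ) (F : Finset ℕ) : Finset ℕ :=
  insert (m + 2) (F.map (addRightEmbedding 1))

lemma insertShift_subset_Icc {m : ℕ} {F : Finset ℕ} (hF : F ⊆ Icc 1 m) :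
    insertShift m F ⊆ Icc 1 (m + 2) := by
  refine insert_subset (by simp) ((map_subset_map.2 hF).trans ?_)
  rw [map_add_right_Icc]
  exact Icc_subset_Icc (by omega) (by omega)

lemma add_two_notMem_map_addRightEmbedding {m : ℕ} {F : Finset ℕ} (hF : F ⊆ Icc 1 m) :
    m + 2 ∉ F.map (addRightEmbedding 1) := by
  intro h
  have := (map_subset_map.2 hF) h
  rw [map_add_right_Icc, mem_Icc] at this
  omega

lemma isAdmissible_insertShift_iff {j m : ℕ} (hjm : j ≤ m) {F : Finset ℕ} (hF : F ⊆ Icc 1 m) :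
    IsAdmissible (j + 1) (insertShift m F) ↔ IsAdmissible j F := by
  have herase : (insertShift m F).erase (j + 1) =
      insert (m + 2) ((F.erase j).map (addRightEmbedding 1)) := by
    rw [insertShift, erase_insert_of_ne (by omega), map_erase]
    rfl
  have hcard : #((insertShift m F).erase (j + 1)) = #(F.erase j) + 1 := by
    rw [herase, card_insert_of_notMem, card_map]
    exact fun h => add_two_notMem_map_addRightEmbedding hF (map_subset_map.2 (erase_subset j F) h)
  have hsmall : #(F.erase j) < m + 1 := by
    have := (card_le_card ((erase_subset j F).trans hF)).trans_eq (Nat.card_Icc 1 m)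
    omega
  rw [IsAdmissible, IsAdmissible, hcard]
  simp only [insertShift, forall_mem_insert, forall_mem_map, addRightEmbedding_apply,
    add_lt_add_iff_right]
  exact and_iff_right hsmall

lemma filter_mem_admissibleSets {j m : ℕ} (hjm : j ≤ m) :
    (admissibleSets (j + 1) (m + 2)).filter (fun E => m + 2 ∈ E) =
      (admissibleSets j m).image (insertShift m) := by
  ext E
  simp only [mem_filter, mem_image, mem_admissibleSets]
  constructor
  · rintro ⟨⟨hE, hadm⟩, hmE⟩
    have hge : ∀ x ∈ E, 2 ≤ x := by
      have : 0 < #(E.erase (j + 1)) := card_pos.2 ⟨m + 2, mem_erase.2 ⟨by omega, hmE⟩⟩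
      exact fun x hx => by have := hadm x hx; omega
    have hsub : E.erase (m + 2) ⊆ (Icc 1 m).map (addRightEmbedding 1) := by
      intro x hx
      obtain ⟨hxm, hx⟩ := mem_erase.1 hx
      have := mem_Icc.1 (hE hx)
      rw [map_add_right_Icc, mem_Icc]
      exact ⟨hge x hx, by omega⟩
    obtain ⟨F, hF, hFE⟩ := subset_map_iff.1 hsub
    have hEF : insertShift m F = E := by rw [insertShift, ← hFE, insert_erase hmE]
    exact ⟨F, ⟨hF, (isAdmissible_insertShift_iff hjm hF).1 (hEF ▸ hadm)⟩, hEF⟩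
  · rintro ⟨F, ⟨hF, hadm⟩, rfl⟩
    exact ⟨⟨insertShift_subset_Icc hF, (isAdmissible_insertShift_iff hjm hF).2 hadm⟩,
      mem_insert_self _ _⟩

lemma injOn_insertShift (j m : ℕ) : Set.InjOn (insertShift m) (admissibleSets j m) := by
  intro F hF G hG h
  have hF := (mem_admissibleSets.1 hF).1
  have hG := (mem_admissibleSets.1 hG).1
  have := congrArg (·.erase (m + 2)) h
  simp only [insertShift, erase_insert (add_two_notMem_map_addRightEmbedding hF),
    erase_insert (add_two_notMem_map_addRightEmbedding hG)] at this
  exact map_injective _ this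

theorem stmt2 (k n : ℕ) (hk : 1 ≤ k) (hn : n > max k 2) :
    a k n = a k (n - 1) + a (k - 1) (n - 2) := by
  obtain ⟨j, rfl⟩ : ∃ j, k = j + 1 := ⟨k - 1, by omega⟩
  obtain ⟨m, rfl⟩ : ∃ m, n = m + 2 := ⟨n - 2, by omega⟩
  have hjm : j ≤ m := by omega
  simp only [a_eq_card_admissibleSets, Nat.add_sub_cancel, Nat.reduceSubDiff]
  rw [← card_filter_add_card_filter_not (fun E => m + 2 ∈ E), add_comm,
    filter_notMem_admissibleSets, filter_mem_admissibleSets hjm,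
    card_image_of_injOn (injOn_insertShift j m)]
end

section
/- For every integer ℓ ≥ 0, a_{1,1+ℓ} = F_{ℓ+2} + 1, where a_{1,n} counts subsets E of {1,...,n} that are empty or satisfy ω_1(E) < min E. -/
open Finset

lemma sum_choose_eq_fib (n : ℕ) :
    ∑ k ∈ range (n + 1), (n - k).choose k = Nat.fib (n + 1) := by
  rw [Nat.fib_succ_eq_sum_choose, Finset.Nat.sum_antidiagonal_eq_sum_range_succ
    (f := fun i j => Nat.choose i j)]
  rw [← Finset.sum_range_reflect]
  apply Finset.sum_congr rfl
  intro k hk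
  simp only [mem_range] at hk
  congr 1 <;> omega

theorem stmt3 (ℓ : ℕ) : a 1 (1 + ℓ) = Nat.fib (ℓ + 2) + 1 := by
  set n := 1 + ℓ with hn
  have hn1 : 1 ≤ n := by omega
  set B : Finset (Finset ℕ) :=
    (Icc 1 n).biUnion (fun k => (Icc (k + 1) n).powersetCard k) with hB
  have hset : {E : Finset ℕ | E ⊆ Finset.Icc 1 n ∧
      (E = ∅ ∨ ∃ h : E.Nonempty, (E.erase 1).card < E.min' h)}
      = ↑(insert (∅ : Finset ℕ) (insert ({1} : Finset ℕ) B)) := by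
    ext E
    simp only [Set.mem_setOf_eq, coe_insert, Set.mem_insert_iff, mem_coe, hB, mem_biUnion,
      mem_powersetCard, mem_Icc]
    constructor
    · rintro ⟨hsub, hE⟩
      rcases hE with rfl | ⟨hne, hlt⟩
      · exact Or.inl rfl
      right
      by_cases h1 : 1 ∈ E
      · left
        have hmin : E.min' hne = 1 := by
          apply le_antisymm (min'_le _ _ h1)
          have := hsub (E.min'_mem hne)
          simp [mem_Icc] at this; omega
        rw [hmin] at hlt
        have : E.card ≤ 1 := by
          have := E.card_erase_of_mem h1; omega
        have : E = {1} := by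
          apply Finset.eq_singleton_iff_unique_mem.mpr
          refine ⟨h1, fun x hx => ?_⟩
          by_contra hne'
          have : 1 < E.card := Finset.one_lt_card.mpr ⟨x, hx, 1, h1, hne'⟩
          omega
        exact this
      · right
        refine ⟨E.card, ⟨hne.card_pos, ?_⟩, ?_, rfl⟩
        · have := Finset.card_le_card hsub
          simpa [Nat.card_Icc] using this
        · intro x hx
          have hx1 := hsub hx
          simp only [mem_Icc] at hx1 ⊢
          have herase : E.erase 1 = E := Finset.erase_eq_of_notMem h1
          rw [herase] at hlt
          have : E.min' hne ≤ x := min'_le _ _ hx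
          omega
    · rintro (rfl | rfl | ⟨k, ⟨hk1, hkn⟩, hsub, hcard⟩)
      · exact ⟨empty_subset _, Or.inl rfl⟩
      · refine ⟨?_, Or.inr ⟨⟨1, mem_singleton_self 1⟩, ?_⟩⟩
        · intro x hx; simp at hx; subst hx; simp [mem_Icc]; omega
        · simp
      · have hne : E.Nonempty := by
          rw [← Finset.card_pos, hcard]; omega
        refine ⟨fun x hx => ?_, Or.inr ⟨hne, ?_⟩⟩
        · have := hsub hx; simp [mem_Icc] at this ⊢; omega
        · have h1 : 1 ∉ E := fun h => by
            have := hsub h; simp [mem_Icc] at this; omega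
          have hmin := hsub (E.min'_mem hne)
          rw [mem_Icc] at hmin
          rw [Finset.erase_eq_of_notMem h1, hcard]
          omega
  rw [a, hset, Set.ncard_coe_finset]
  have hE1B : ({1} : Finset ℕ) ∉ B := by
    simp only [hB, mem_biUnion, mem_powersetCard, mem_Icc]
    rintro ⟨k, ⟨hk1, -⟩, hsub, hcard⟩
    have := hsub (mem_singleton_self 1)
    simp [mem_Icc] at this; omega
  have hEB : (∅ : Finset ℕ) ∉ insert ({1} : Finset ℕ) B := by
    simp only [mem_insert]
    rintro (h | h)
    · exact (singleton_ne_empty 1) h.symm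
    · simp only [hB, mem_biUnion, mem_powersetCard] at h
      obtain ⟨k, hk, -, hcard⟩ := h
      simp [mem_Icc] at hk
      simp at hcard; omega
  rw [card_insert_of_notMem hEB, card_insert_of_notMem hE1B]
  have hcardB : B.card = ∑ k ∈ Icc 1 n, (n - k).choose k := by
    rw [hB, card_biUnion]
    · apply Finset.sum_congr rfl
      intro k hk
      rw [Finset.card_powersetCard, Nat.card_Icc]
      congr 1
      simp [mem_Icc] at hk; omega
    · intro i hi j hj hij
      simp only [Finset.disjoint_left, mem_powersetCard]
      rintro E ⟨-, hEi⟩ ⟨-, hEj⟩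
      exact hij (hEi ▸ hEj ▸ rfl)
  rw [hcardB]
  have hsum : ∑ k ∈ range (n + 1), (n - k).choose k
      = 1 + ∑ k ∈ Icc 1 n, (n - k).choose k := by
    have : range (n + 1) = insert 0 (Icc 1 n) := by
      ext x; simp [mem_Icc, mem_range, mem_insert]; omega
    rw [this, Finset.sum_insert (by simp [mem_Icc])]
    simp
  have := sum_choose_eq_fib n
  rw [hsum] at this
  have hfib : Nat.fib (n + 1) = Nat.fib (ℓ + 2) := by rw [hn]; ring_nf
  omega
end

section
/- For integers ℓ ≥ 0 and k ≥ ℓ + 2, the count a_{k,k+ℓ} of subsets E of {1,...,k+ℓ} that are empty or satisfy ω_k(E) < min E equals 2F_{k+ℓ}. -/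
open Finset

def cgood (m : ℕ) : Finset (Finset ℕ) :=
  (Finset.Icc 1 m).powerset.filter (fun E => ∀ x ∈ E, E.card < x)

lemma cgood_zero : (cgood 0).card = 1 := by decide

lemma cgood_one : (cgood 1).card = 1 := by decide

lemma cgood_rec (m : ℕ) :
    (cgood (m+2)).card = (cgood m).card + (cgood (m+1)).card := by
  rw [cgood, ← Finset.card_filter_add_card_filter_not (p := fun E => (m+2) ∈ E)]
  congr 1
  · -- sets containing m+2 ↔ cgood m
    refine Finset.card_bij' (fun E _ => (E.erase (m+2)).image (· - 1))
      (fun E _ => insert (m+2) (E.image (· + 1))) ?hi ?hj ?left_inv ?right_inv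
    case hi =>
      intro E hE
      simp only [Finset.mem_filter, Finset.mem_powerset] at hE
      obtain ⟨⟨hsub, hq⟩, hmem⟩ := hE
      have hcpos : 1 ≤ E.card := Finset.card_pos.mpr ⟨_, hmem⟩
      have hx2 : ∀ x ∈ E, 2 ≤ x := fun x hx => by have := hq x hx; omega
      have hinj : Set.InjOn (· - 1) ↑(E.erase (m+2)) := by
        intro x hx y hy h
        simp only [Finset.coe_erase, Set.mem_diff, Finset.mem_coe] at hx hy
        have := hx2 x hx.1; have := hx2 y hy.1
        have h' : x - 1 = y - 1 := h
        omega
      have hcard : ((E.erase (m+2)).image (· - 1)).card = E.card - 1 := by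
        rw [Finset.card_image_of_injOn hinj, Finset.card_erase_of_mem hmem]
      simp only [cgood, Finset.mem_filter, Finset.mem_powerset]
      constructor
      · intro y hy
        simp only [Finset.mem_image, Finset.mem_erase] at hy
        obtain ⟨x, ⟨hxne, hxE⟩, hxy⟩ := hy
        have := hsub hxE
        rw [Finset.mem_Icc] at this ⊢
        have := hx2 x hxE
        omega
      · intro y hy
        rw [hcard]
        simp only [Finset.mem_image, Finset.mem_erase] at hy
        obtain ⟨x, ⟨hxne, hxE⟩, hxy⟩ := hy
        have := hq x hxE
        omega
    case hj =>
      intro E hE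
      simp only [cgood, Finset.mem_filter, Finset.mem_powerset] at hE
      obtain ⟨hsub, hq⟩ := hE
      have hnotmem : (m+2) ∉ E.image (· + 1) := by
        simp only [Finset.mem_image, not_exists]
        rintro x ⟨hx, hxe⟩
        have := hsub hx; rw [Finset.mem_Icc] at this; omega
      have hcard : (insert (m+2) (E.image (· + 1))).card = E.card + 1 := by
        rw [Finset.card_insert_of_notMem hnotmem,
          Finset.card_image_of_injective _ (add_left_injective 1)]
      have hEle : E.card ≤ m := by
        have h := Finset.card_le_card hsub
        rw [Nat.card_Icc] at h
        omega
      simp only [Finset.mem_filter, Finset.mem_powerset]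
      refine ⟨⟨?_, ?_⟩, Finset.mem_insert_self _ _⟩
      · apply Finset.insert_subset
        · rw [Finset.mem_Icc]; omega
        · intro y hy
          simp only [Finset.mem_image] at hy
          obtain ⟨x, hx, hxy⟩ := hy
          have := hsub hx; rw [Finset.mem_Icc] at this ⊢; omega
      · intro y hy
        rw [hcard]
        rcases Finset.mem_insert.mp hy with h | h
        · omega
        · simp only [Finset.mem_image] at h
          obtain ⟨x, hx, hxy⟩ := h
          have := hq x hx; omega
    case left_inv =>
      intro E hE
      simp only [Finset.mem_filter, Finset.mem_powerset] at hE
      obtain ⟨⟨hsub, hq⟩, hmem⟩ := hE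
      have hcpos : 1 ≤ E.card := Finset.card_pos.mpr ⟨_, hmem⟩
      have hx2 : ∀ x ∈ E, 2 ≤ x := fun x hx => by have := hq x hx; omega
      show insert (m+2) ((((E.erase (m+2)).image (· - 1))).image (· + 1)) = E
      ext a
      simp only [Finset.mem_insert, Finset.mem_image, Finset.mem_erase]
      constructor
      · rintro (rfl | ⟨y, ⟨x, ⟨hxne, hxE⟩, hxy⟩, hya⟩)
        · exact hmem
        · have := hx2 x hxE; have : a = x := by omega
          rwa [this]
      · intro ha
        by_cases h : a = m + 2
        · left; exact h
        · right
          exact ⟨a - 1, ⟨a, ⟨h, ha⟩, rfl⟩, by have := hx2 a ha; omega⟩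
    case right_inv =>
      intro E hE
      simp only [cgood, Finset.mem_filter, Finset.mem_powerset] at hE
      obtain ⟨hsub, hq⟩ := hE
      have hnotmem : (m+2) ∉ E.image (· + 1) := by
        simp only [Finset.mem_image, not_exists]
        rintro x ⟨hx, hxe⟩
        have := hsub hx; rw [Finset.mem_Icc] at this; omega
      show ((insert (m+2) (E.image (· + 1))).erase (m+2)).image (· - 1) = E
      rw [Finset.erase_insert hnotmem]
      ext a
      simp only [Finset.mem_image]
      constructor
      · rintro ⟨y, ⟨x, hx, rfl⟩, rfl⟩
        simpa using hx
      · intro ha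
        exact ⟨a + 1, ⟨a, ha, rfl⟩, rfl⟩
  · -- sets not containing m+2 = cgood (m+1)
    congr 1
    ext E
    simp only [cgood, Finset.mem_filter, Finset.mem_powerset]
    constructor
    · rintro ⟨⟨hsub, hq⟩, hnm⟩
      refine ⟨?_, hq⟩
      intro x hx
      have := hsub hx
      rw [Finset.mem_Icc] at this ⊢
      have : x ≠ m + 2 := fun h => hnm (h ▸ hx)
      omega
    · rintro ⟨hsub, hq⟩
      refine ⟨⟨?_, hq⟩, fun h => ?_⟩
      · intro x hx; have := hsub hx; rw [Finset.mem_Icc] at this ⊢; omega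
      · have := hsub h; rw [Finset.mem_Icc] at this; omega

lemma cgood_card (m : ℕ) : (cgood m).card = Nat.fib (m+1) := by
  induction m using Nat.strong_induction_on with
  | _ m ih =>
    match m with
    | 0 => simpa using cgood_zero
    | 1 => simpa using cgood_one
    | (m+2) =>
      rw [cgood_rec, ih (m+1) (by omega), ih m (by omega),
        show m+2+1 = m+1+2 from rfl, Nat.fib_add_two (n := m+1)]

lemma a_eq (k n : ℕ) :
    a k n = ((Finset.Icc 1 n).powerset.filter
      (fun E => ∀ x ∈ E, (E.erase k).card < x)).card := by
  rw [a, ← Set.ncard_coe_finset]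
  congr 1
  ext E
  simp only [Finset.coe_filter, Finset.mem_powerset, Set.mem_setOf_eq]
  constructor
  · rintro ⟨hsub, h | ⟨hne, hlt⟩⟩
    · exact ⟨hsub, by simp [h]⟩
    · exact ⟨hsub, fun x hx => lt_of_lt_of_le hlt (Finset.min'_le E x hx)⟩
  · rintro ⟨hsub, h⟩
    refine ⟨hsub, ?_⟩
    rcases E.eq_empty_or_nonempty with he | hne
    · exact Or.inl he
    · exact Or.inr ⟨hne, h _ (E.min'_mem hne)⟩

lemma card_le_aux (k ℓ : ℕ) (hk : k ≥ ℓ + 2) (E : Finset ℕ)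
    (hE : E ⊆ Finset.Icc 1 (k+ℓ)) (hkE : k ∉ E) (hq : ∀ x ∈ E, E.card < x) :
    E.card + 2 ≤ k := by
  by_cases hex : ∃ z ∈ E, z < k
  · obtain ⟨z, hz, hzk⟩ := hex
    have := hq z hz
    omega
  · push_neg at hex
    have hsub : E ⊆ Finset.Icc (k+1) (k+ℓ) := by
      intro x hx
      have h1 := hE hx
      rw [Finset.mem_Icc] at h1 ⊢
      have h2 := hex x hx
      have h3 : x ≠ k := fun h => hkE (h ▸ hx)
      omega
    have := Finset.card_le_card hsub
    rw [Nat.card_Icc] at this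
    omega

theorem stmt4 (k ℓ : ℕ) (hk : k ≥ ℓ + 2) :
    a k (k + ℓ) = 2 * Nat.fib (k + ℓ) := by
  have hk2 : 2 ≤ k := by omega
  rw [a_eq]
  set n := k + ℓ with hn
  set T := (Finset.Icc 1 n).powerset.filter
      (fun E => ∀ x ∈ E, (E.erase k).card < x) with hT
  have hsplit := Finset.card_filter_add_card_filter_not (s := T)
      (p := fun E => k ∈ E)
  have hAB : (T.filter (fun E => k ∈ E)).card = (T.filter (fun E => ¬ k ∈ E)).card := by
    refine Finset.card_bij' (fun E _ => E.erase k) (fun E _ => insert k E)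
      ?hi ?hj ?li ?ri
    case hi =>
      intro E hE
      simp only [hT, Finset.mem_filter, Finset.mem_powerset] at hE ⊢
      obtain ⟨⟨hsub, hp⟩, hkE⟩ := hE
      refine ⟨⟨fun x hx => hsub (Finset.mem_of_mem_erase hx), ?_⟩, Finset.notMem_erase _ _⟩
      rw [Finset.erase_idem]
      exact fun x hx => hp x (Finset.mem_of_mem_erase hx)
    case hj =>
      intro E hE
      simp only [hT, Finset.mem_filter, Finset.mem_powerset] at hE ⊢
      obtain ⟨⟨hsub, hp⟩, hkE⟩ := hE
      rw [Finset.erase_eq_of_notMem hkE] at hp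
      have hcard := card_le_aux k ℓ hk E hsub hkE hp
      refine ⟨⟨Finset.insert_subset (by rw [Finset.mem_Icc]; omega) hsub, ?_⟩,
        Finset.mem_insert_self _ _⟩
      rw [Finset.erase_insert hkE]
      intro x hx
      rcases Finset.mem_insert.mp hx with rfl | hx
      · omega
      · exact hp x hx
    case li =>
      intro E hE
      simp only [hT, Finset.mem_filter, Finset.mem_powerset] at hE
      exact Finset.insert_erase hE.2
    case ri =>
      intro E hE
      simp only [hT, Finset.mem_filter, Finset.mem_powerset] at hE
      exact Finset.erase_insert hE.2
  have hAfib : (T.filter (fun E => ¬ k ∈ E)).card = Nat.fib n := by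
    have hcg : (T.filter (fun E => ¬ k ∈ E)).card = (cgood (n-1)).card := by
      refine Finset.card_bij'
        (fun E _ => E.image (fun x => if x < k then x else x - 1))
        (fun E _ => E.image (fun x => if x < k then x else x + 1)) ?hi ?hj ?li ?ri
      case hi =>
        intro E hE
        simp only [hT, Finset.mem_filter, Finset.mem_powerset] at hE
        obtain ⟨⟨hsub, hp⟩, hkE⟩ := hE
        rw [Finset.erase_eq_of_notMem hkE] at hp
        have hcard := card_le_aux k ℓ hk E hsub hkE hp
        have hbd : ∀ x ∈ E, 1 ≤ x ∧ x ≤ n ∧ x ≠ k := by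
          intro x hx
          have h1 := hsub hx
          rw [Finset.mem_Icc] at h1
          exact ⟨h1.1, h1.2, fun h => hkE (h ▸ hx)⟩
        have hinj : Set.InjOn (fun x => if x < k then x else x - 1) ↑E := by
          intro x hx y hy h
          obtain ⟨_, _, _⟩ := hbd x (Finset.mem_coe.mp hx)
          obtain ⟨_, _, _⟩ := hbd y (Finset.mem_coe.mp hy)
          simp only at h
          split_ifs at h <;> omega
        have hcardim := Finset.card_image_of_injOn hinj
        simp only [cgood, Finset.mem_filter, Finset.mem_powerset]
        constructor
        · intro y hy
          simp only [Finset.mem_image] at hy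
          obtain ⟨x, hx, hxy⟩ := hy
          obtain ⟨_, _, _⟩ := hbd x hx
          rw [Finset.mem_Icc]
          split_ifs at hxy <;> omega
        · intro y hy
          rw [hcardim]
          simp only [Finset.mem_image] at hy
          obtain ⟨x, hx, hxy⟩ := hy
          obtain ⟨_, _, _⟩ := hbd x hx
          have := hp x hx
          split_ifs at hxy <;> omega
      case hj =>
        intro E hE
        simp only [cgood, Finset.mem_filter, Finset.mem_powerset] at hE
        obtain ⟨hsub, hq⟩ := hE
        have hbd : ∀ x ∈ E, 1 ≤ x ∧ x ≤ n - 1 := by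
          intro x hx
          have h1 := hsub hx
          rw [Finset.mem_Icc] at h1
          exact h1
        have hknim : k ∉ E.image (fun x => if x < k then x else x + 1) := by
          simp only [Finset.mem_image, not_exists]
          rintro x ⟨hx, hxk⟩
          split_ifs at hxk <;> omega
        have hinj : Set.InjOn (fun x => if x < k then x else x + 1) ↑E := by
          intro x hx y hy h
          simp only at h
          split_ifs at h <;> omega
        simp only [hT, Finset.mem_filter, Finset.mem_powerset]
        refine ⟨⟨?_, ?_⟩, hknim⟩
        · intro y hy
          simp only [Finset.mem_image] at hy
          obtain ⟨x, hx, hxy⟩ := hy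
          obtain ⟨_, _⟩ := hbd x hx
          rw [Finset.mem_Icc]
          split_ifs at hxy <;> omega
        · rw [Finset.erase_eq_of_notMem hknim, Finset.card_image_of_injOn hinj]
          intro y hy
          simp only [Finset.mem_image] at hy
          obtain ⟨x, hx, hxy⟩ := hy
          have := hq x hx
          split_ifs at hxy <;> omega
      case li =>
        intro E hE
        simp only [hT, Finset.mem_filter, Finset.mem_powerset] at hE
        obtain ⟨⟨hsub, hp⟩, hkE⟩ := hE
        have hbd : ∀ x ∈ E, 1 ≤ x ∧ x ≤ n ∧ x ≠ k := by
          intro x hx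
          have h1 := hsub hx
          rw [Finset.mem_Icc] at h1
          exact ⟨h1.1, h1.2, fun h => hkE (h ▸ hx)⟩
        show (E.image (fun x => if x < k then x else x - 1)).image
            (fun x => if x < k then x else x + 1) = E
        rw [Finset.image_image]
        have heq : Set.EqOn ((fun x => if x < k then x else x + 1) ∘
            (fun x => if x < k then x else x - 1)) id ↑E := by
          intro x hx
          obtain ⟨_, _, _⟩ := hbd x (Finset.mem_coe.mp hx)
          simp only [Function.comp, id]
          split_ifs <;> omega
        rw [Finset.image_congr heq, Finset.image_id]
      case ri =>
        intro E hE
        show (E.image (fun x => if x < k then x else x + 1)).image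
            (fun x => if x < k then x else x - 1) = E
        rw [Finset.image_image]
        have heq : Set.EqOn ((fun x => if x < k then x else x - 1) ∘
            (fun x => if x < k then x else x + 1)) id ↑E := by
          intro x _
          simp only [Function.comp, id]
          split_ifs <;> omega
        rw [Finset.image_congr heq, Finset.image_id]
    rw [hcg, cgood_card, show n - 1 + 1 = n by omega]
  omega
end

section
/- For integers k ≥ 2 and ℓ ≥ 0, a_{k,k+ℓ} = 2·∑_{i=0}^{k-2} C(ℓ,i)·F_{k-i} + 2·C(ℓ,k-1) + ∑_{j=1}^{ℓ} C(j, ℓ-j+k). -/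
open Finset

theorem Nat.fib_succ_eq_sum_range_choose (n : ℕ) :
    Nat.fib (n + 1) = ∑ p ∈ range (n + 1), (n - p).choose p := by
  rw [Nat.fib_succ_eq_sum_choose, ← Nat.sum_antidiagonal_swap,
    Nat.sum_antidiagonal_eq_sum_range_succ_mk]
  rfl

theorem Nat.add_choose_eq_sum_range (m n k : ℕ) :
    (m + n).choose k = ∑ i ∈ range (k + 1), m.choose i * n.choose (k - i) := by
  rw [Nat.add_choose_eq, Nat.sum_antidiagonal_eq_sum_range_succ (fun i j => m.choose i * n.choose j)]

theorem Nat.sum_range_add_choose_eq_sum_choose_mul_fib (ℓ K : ℕ) :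
    ∑ m ∈ range K, (ℓ + (K - 1 - m)).choose m = ∑ i ∈ range K, ℓ.choose i * Nat.fib (K - i) := by
  calc ∑ m ∈ range K, (ℓ + (K - 1 - m)).choose m
      = ∑ m ∈ range K, ∑ i ∈ range (m + 1),
          ℓ.choose i * (K - 1 - i - (m - i)).choose (m - i) := by
        refine sum_congr rfl fun m hm => ?_
        rw [Nat.add_choose_eq_sum_range]
        refine sum_congr rfl fun i hi => ?_
        rw [mem_range] at hm hi
        rw [show K - 1 - i - (m - i) = K - 1 - m by omega]
    _ = ∑ i ∈ range K, ∑ p ∈ range (K - i), ℓ.choose i * (K - 1 - i - p).choose p :=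
        sum_range_diag_flip K fun i p => ℓ.choose i * (K - 1 - i - p).choose p
    _ = ∑ i ∈ range K, ℓ.choose i * Nat.fib (K - i) := by
        refine sum_congr rfl fun i hi => ?_
        rw [← mul_sum]
        obtain ⟨N, hN⟩ : ∃ N, K - i = N + 1 := ⟨K - 1 - i, by rw [mem_range] at hi; omega⟩
        rw [hN, Nat.fib_succ_eq_sum_range_choose]
        congr 1
        refine sum_congr rfl fun p _ => ?_
        congr 2
        omega

theorem Nat.sum_range_sub_choose_eq_sum_Icc (k ℓ : ℕ) (hk : 0 < k) :
    ∑ j ∈ range (ℓ + 1), (ℓ - j).choose (k + j) = ∑ j ∈ Icc 1 ℓ, j.choose (ℓ - j + k) := by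
  rw [sum_range_succ, Nat.sub_self, Nat.choose_eq_zero_of_lt (by omega), add_zero,
    ← sum_range_reflect, ← Ico_add_one_right_eq_Icc, sum_Ico_eq_sum_range, Nat.add_sub_cancel]
  refine sum_congr rfl fun j hj => ?_
  rw [mem_range] at hj
  rw [show ℓ - (ℓ - 1 - j) = 1 + j by omega, show k + (ℓ - 1 - j) = ℓ - (1 + j) + k by omega]

theorem Finset.eq_empty_or_lt_min'_iff {α : Type*} [LinearOrder α] {s : Finset α} {c : α} :
    (s = ∅ ∨ ∃ h : s.Nonempty, c < s.min' h) ↔ ∀ x ∈ s, c < x := by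
  rcases s.eq_empty_or_nonempty with rfl | hs
  · simp
  · simp [hs.ne_empty, hs, lt_min'_iff]

section CardErase

variable {α : Type*} [DecidableEq α]

theorem Finset.card_filter_powerset_card_erase_of_notMem {U : Finset α} {k : α} (hk : k ∉ U)
    (m : ℕ) : #{E ∈ U.powerset | #(E.erase k) = m} = (#U).choose m := by
  rw [← card_powersetCard, powersetCard_eq_filter]
  refine congrArg card (filter_congr fun E hE => ?_)
  rw [erase_eq_of_notMem fun h => hk (mem_powerset.1 hE h)]

theorem Finset.card_filter_powerset_card_erase (U : Finset α) (k : α) (m : ℕ) :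
    #{E ∈ U.powerset | #(E.erase k) = m} = (#(U.erase k)).choose m * if k ∈ U then 2 else 1 := by
  split_ifs with hk
  · obtain ⟨V, hkV, rfl⟩ : ∃ V, k ∉ V ∧ U = insert k V :=
      ⟨U.erase k, notMem_erase k U, (insert_erase hk).symm⟩
    have hkE : ∀ E ∈ V.powerset, k ∉ E := fun E hE h => hkV (mem_powerset.1 hE h)
    rw [powerset_insert, filter_union, card_union_of_disjoint, filter_image,
      card_image_of_injOn, erase_insert hkV, card_filter_powerset_card_erase_of_notMem hkV]
    · rw [← card_filter_powerset_card_erase_of_notMem hkV m, mul_two]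
      congr 2
      exact filter_congr fun E hE => by
        rw [erase_insert (hkE E hE), erase_eq_of_notMem (hkE E hE)]
    · intro E hE F hF hEF
      rw [← erase_insert (hkE E (mem_filter.1 hE).1), hEF,
        erase_insert (hkE F (mem_filter.1 hF).1)]
    · refine disjoint_left.2 fun E hE hE' => hkE E (mem_filter.1 hE).1 ?_
      obtain ⟨F, -, rfl⟩ := mem_image.1 (mem_filter.1 hE').1
      exact mem_insert_self k F
  · rw [erase_eq_of_notMem hk, card_filter_powerset_card_erase_of_notMem hk, mul_one]

end CardErase

theorem a_eq_card_filter (k n : ℕ) :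
    a k n = #{E ∈ (Icc 1 n).powerset | ∀ x ∈ E, #(E.erase k) < x} := by
  rw [a, ← Set.ncard_coe_finset, coe_filter]
  simp only [mem_powerset, eq_empty_or_lt_min'_iff]

theorem a_eq_sum (k n : ℕ) :
    a k n = ∑ m ∈ range (n + 1),
      (#((Ioc m n).erase k)).choose m * if k ∈ Ioc m n then 2 else 1 := by
  rw [a_eq_card_filter,
    card_eq_sum_card_fiberwise (f := fun E => #(E.erase k)) (t := range (n + 1))]
  · refine sum_congr rfl fun m _ => ?_
    rw [← card_filter_powerset_card_erase, filter_filter]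
    congr 1
    ext E
    simp only [mem_filter, mem_powerset, subset_iff, mem_Icc, mem_Ioc]
    constructor
    · rintro ⟨hE, hlt, rfl⟩
      exact ⟨fun x hx => ⟨hlt x hx, (hE hx).2⟩, rfl⟩
    · rintro ⟨hE, rfl⟩
      exact ⟨fun x hx => ⟨by have := (hE hx).1; omega, (hE hx).2⟩, fun x hx => (hE hx).1, rfl⟩
  · intro E hE
    have hEn : #E ≤ n := by simpa using card_le_card (mem_powerset.1 (mem_filter.1 hE).1)
    simp only [coe_range, Set.mem_Iio]
    have := card_erase_le (s := E) (a := k)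
    omega

theorem a_add_eq (k ℓ : ℕ) :
    a k (k + ℓ) = 2 * ∑ m ∈ range k, (ℓ + (k - 1 - m)).choose m
      + ∑ j ∈ range (ℓ + 1), (ℓ - j).choose (k + j) := by
  rw [a_eq_sum, add_assoc, sum_range_add, mul_sum]
  congr 1
  · refine sum_congr rfl fun m hm => ?_
    have hkm : k ∈ Ioc m (k + ℓ) := mem_Ioc.2 ⟨mem_range.1 hm, by omega⟩
    rw [if_pos hkm, card_erase_of_mem hkm, Nat.card_Ioc, mul_comm,
      show k + ℓ - m - 1 = ℓ + (k - 1 - m) by have := mem_range.1 hm; omega]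
  · refine sum_congr rfl fun j _ => ?_
    have hkj : k ∉ Ioc (k + j) (k + ℓ) := fun h => by have := (mem_Ioc.1 h).1; omega
    rw [if_neg hkj, erase_eq_of_notMem hkj, Nat.card_Ioc, mul_one, Nat.add_sub_add_left]

theorem stmt5 (k ℓ : ℕ) (hk : k ≥ 2) :
    a k (k + ℓ) =
      2 * ∑ i ∈ Finset.range (k - 1), Nat.choose ℓ i * Nat.fib (k - i)
        + 2 * Nat.choose ℓ (k - 1)
        + ∑ j ∈ Finset.Icc 1 ℓ, Nat.choose j (ℓ - j + k) := by
  obtain ⟨K, rfl⟩ : ∃ K, k = K + 1 := ⟨k - 1, by omega⟩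
  rw [a_add_eq, Nat.sum_range_add_choose_eq_sum_choose_mul_fib,
    Nat.sum_range_sub_choose_eq_sum_Icc _ _ K.succ_pos, sum_range_succ, Nat.add_sub_cancel,
    Nat.add_sub_cancel_left, Nat.fib_one, mul_one, mul_add]
end

section
/- For every positive integer n, the number of finite sets E of positive integers with max E = n+1, min E > ω_{2,3}(E), and |E| ≠ 2, equals F_n. -/
/-!
Let `L_n` be the sets `E` with `max E = n` and `|E| < min E`. Deleting the maximum and shifting
down by one identifies `L_{m+2}` with the sets `S ⊆ [1, m]` with `|S| < min S`; sorting these by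
whether they contain `m` gives the Fibonacci recursion, so `|L_{n+1}| = F_n`.

`K_n` and `L_n` coincide except on two small families: the three-element sets of `K_n`
containing `3` (namely `{2, 3, n}` and `{3, x, n}` with `3 < x < n`) and the two-element sets
`{y, n}` of `L_n`. Applying the transposition `(2 3)` and then deleting `2` maps the first family
bijectively onto the second.
-/

open Finset

def strictSchreier (m : ℕ) : Finset (Finset ℕ) :=
  (Icc 1 m).powerset.filter fun S => ∀ x ∈ S, #S < x

def strictSchreierMax (n : ℕ) : Finset (Finset ℕ) :=
  (strictSchreier n).filter (n ∈ ·)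

theorem mem_strictSchreier {m : ℕ} {S : Finset ℕ} :
    S ∈ strictSchreier m ↔ S ⊆ Icc 1 m ∧ ∀ x ∈ S, #S < x := by
  simp [strictSchreier]

theorem mem_strictSchreierMax {n : ℕ} {S : Finset ℕ} :
    S ∈ strictSchreierMax n ↔ S ⊆ Icc 1 n ∧ (∀ x ∈ S, #S < x) ∧ n ∈ S := by
  simp [strictSchreierMax, mem_strictSchreier, and_assoc]

theorem filter_notMem_strictSchreier_succ (m : ℕ) :
    (strictSchreier (m + 1)).filter (m + 1 ∉ ·) = strictSchreier m := by
  ext S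
  simp only [mem_filter, mem_strictSchreier, subset_iff, mem_Icc]
  constructor
  · rintro ⟨⟨hS, hcard⟩, hm⟩
    exact ⟨fun x hx => ⟨(hS hx).1, by grind⟩, hcard⟩
  · rintro ⟨hS, hcard⟩
    exact ⟨⟨fun x hx => ⟨(hS hx).1, by grind⟩, hcard⟩, fun hm => by grind⟩

theorem image_sub_one_image_add_one (T : Finset ℕ) : (T.image (· + 1)).image (· - 1) = T := by
  simp [image_image, Function.comp_def]

theorem image_add_one_image_sub_one {T : Finset ℕ} (hT : ∀ x ∈ T, 1 ≤ x) :
    (T.image (· - 1)).image (· + 1) = T := by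
  rw [image_image]
  conv_rhs => rw [← image_id (s := T)]
  exact image_congr fun x hx => by have := hT x hx; simp only [Function.comp_apply, id_eq]; omega

theorem insert_image_add_one_mem_strictSchreierMax {m : ℕ} {T : Finset ℕ}
    (hT : T ∈ strictSchreier m) :
    insert (m + 2) (T.image (· + 1)) ∈ strictSchreierMax (m + 2) := by
  obtain ⟨hsub, hcard⟩ := mem_strictSchreier.1 hT
  have hnot : m + 2 ∉ T.image (· + 1) := by
    simp only [mem_image, not_exists, not_and]
    intro x hx; have := (mem_Icc.1 (hsub hx)).2; omega
  have hcardT : #T ≤ m := by simpa using card_le_card hsub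
  rw [mem_strictSchreierMax, card_insert_of_notMem hnot,
    card_image_of_injective _ (add_left_injective 1)]
  refine ⟨?_, ?_, mem_insert_self _ _⟩
  · intro y hy
    simp only [mem_insert, mem_image] at hy
    rcases hy with rfl | ⟨x, hx, rfl⟩
    · simp
    · have := mem_Icc.1 (hsub hx); simp only [mem_Icc]; omega
  · intro y hy
    simp only [mem_insert, mem_image] at hy
    rcases hy with rfl | ⟨x, hx, rfl⟩
    · omega
    · have := hcard x hx; omega

theorem image_sub_one_erase_mem_strictSchreier {m : ℕ} {E : Finset ℕ}
    (hE : E ∈ strictSchreierMax (m + 2)) :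
    (E.erase (m + 2)).image (· - 1) ∈ strictSchreier m := by
  obtain ⟨hsub, hcard, hmax⟩ := mem_strictSchreierMax.1 hE
  have hge : ∀ x ∈ E, 2 ≤ x := fun x hx => by
    have := hcard x hx; have := card_pos.2 ⟨x, hx⟩; omega
  have hinj : Set.InjOn (· - 1) (E.erase (m + 2) : Set ℕ) := fun a ha b hb hab => by
    have := hge a (mem_of_mem_erase ha); have := hge b (mem_of_mem_erase hb)
    simp only at hab; omega
  rw [mem_strictSchreier, card_image_of_injOn hinj, card_erase_of_mem hmax]
  constructor
  · intro y hy
    simp only [mem_image, mem_erase] at hy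
    obtain ⟨x, ⟨hne, hx⟩, rfl⟩ := hy
    have := mem_Icc.1 (hsub hx); have := hge x hx
    simp only [mem_Icc]; omega
  · intro y hy
    simp only [mem_image, mem_erase] at hy
    obtain ⟨x, ⟨-, hx⟩, rfl⟩ := hy
    have := hcard x hx; have := card_pos.2 ⟨x, hx⟩; omega

theorem card_strictSchreierMax_add_two (m : ℕ) :
    #(strictSchreierMax (m + 2)) = #(strictSchreier m) := by
  refine (card_nbij' (fun T => insert (m + 2) (T.image (· + 1)))
    (fun E => (E.erase (m + 2)).image (· - 1))
    (fun T hT => insert_image_add_one_mem_strictSchreierMax hT)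
    (fun E hE => image_sub_one_erase_mem_strictSchreier hE) ?_ ?_).symm
  · intro T hT
    have hnot : m + 2 ∉ T.image (· + 1) := by
      simp only [mem_image, not_exists, not_and]
      intro x hx; have := (mem_Icc.1 ((mem_strictSchreier.1 hT).1 hx)).2; omega
    simp only [erase_insert hnot, image_sub_one_image_add_one]
  · intro E hE
    obtain ⟨hsub, -, hmax⟩ := mem_strictSchreierMax.1 hE
    simp only
    rw [image_add_one_image_sub_one fun x hx => (mem_Icc.1 (hsub (mem_of_mem_erase hx))).1,
      insert_erase hmax]

theorem card_strictSchreier_add_two (m : ℕ) :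
    #(strictSchreier (m + 2)) = #(strictSchreier (m + 1)) + #(strictSchreier m) := by
  rw [← card_filter_add_card_filter_not (s := strictSchreier (m + 2)) (m + 2 ∈ ·),
    filter_notMem_strictSchreier_succ, ← strictSchreierMax, card_strictSchreierMax_add_two,
    add_comm]

theorem card_strictSchreier : ∀ m, #(strictSchreier m) = Nat.fib (m + 1)
  | 0 => by decide
  | 1 => by decide
  | m + 2 => by
    rw [card_strictSchreier_add_two, card_strictSchreier (m + 1), card_strictSchreier m,
      Nat.fib_add_two (n := m + 1), add_comm]

theorem card_strictSchreierMax_succ : ∀ n, #(strictSchreierMax (n + 1)) = Nat.fib n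
  | 0 => by decide
  | m + 1 => by rw [card_strictSchreierMax_add_two, card_strictSchreier]

theorem card_sdiff_two_three_add (E : Finset ℕ) :
    #(E \ {2, 3}) + (if 2 ∈ E then 1 else 0) + (if 3 ∈ E then 1 else 0) = #E := by
  rw [← card_sdiff_add_card_inter E {2, 3}]
  by_cases h2 : 2 ∈ E <;> by_cases h3 : 3 ∈ E <;>
    simp [h2, h3, inter_insert_of_mem, inter_insert_of_notMem]

theorem one_lt_of_forall_card_sdiff_lt {E : Finset ℕ} (hE : ∀ x ∈ E, #(E \ {2, 3}) < x)
    {x : ℕ} (hx : x ∈ E) : 1 < x := by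
  by_cases hx23 : x ∈ ({2, 3} : Finset ℕ)
  · simp only [mem_insert, mem_singleton] at hx23; omega
  · have := card_pos.2 ⟨x, mem_sdiff.2 ⟨hx, hx23⟩⟩
    have := hE x hx; omega

theorem forall_card_sdiff_lt_iff_of_card_eq_three {E : Finset ℕ} (hcard : #E = 3) (h3 : 3 ∈ E) :
    (∀ x ∈ E, #(E \ {2, 3}) < x) ↔ ∀ x ∈ E, 1 < x := by
  refine ⟨fun hE x hx => one_lt_of_forall_card_sdiff_lt hE hx, fun hE x hx => ?_⟩
  have hcount := card_sdiff_two_three_add E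
  have hx1 := hE x hx
  grind

theorem forall_card_sdiff_lt_iff {E : Finset ℕ} (h2 : #E ≠ 2) (h3 : ¬(#E = 3 ∧ 3 ∈ E)) :
    (∀ x ∈ E, #(E \ {2, 3}) < x) ↔ ∀ x ∈ E, #E < x := by
  refine ⟨fun hE x hx => ?_, fun hE x hx => (card_le_card sdiff_subset).trans_lt (hE x hx)⟩
  have hcount := card_sdiff_two_three_add E
  have hx1 := one_lt_of_forall_card_sdiff_lt hE hx
  have hxω := hE x hx
  have hω2 := hE 2
  have hω3 := hE 3
  -- if `2 ∈ E` or `3 ∈ E` then `#E = 1`; otherwise `#(E \ {2, 3}) = #E`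
  grind

-- the paper's `K_n`
def KSets (n : ℕ) : Finset (Finset ℕ) :=
  (Icc 1 n).powerset.filter fun E => n ∈ E ∧ #E ≠ 2 ∧ ∀ x ∈ E, #(E \ {2, 3}) < x

theorem mem_KSets {n : ℕ} {E : Finset ℕ} :
    E ∈ KSets n ↔
      E ⊆ Icc 1 n ∧ n ∈ E ∧ #E ≠ 2 ∧ ∀ x ∈ E, #(E \ {2, 3}) < x := by
  simp [KSets]

theorem filter_KSets_eq (n : ℕ) :
    (KSets n).filter (fun E => ¬(#E = 3 ∧ 3 ∈ E)) =
      (strictSchreierMax n).filter (#· ≠ 2) := by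
  ext E
  simp only [mem_filter, mem_KSets, mem_strictSchreierMax]
  constructor
  · rintro ⟨⟨hsub, hn, h2, hE⟩, h3⟩
    exact ⟨⟨hsub, (forall_card_sdiff_lt_iff h2 h3).1 hE, hn⟩, h2⟩
  · rintro ⟨⟨hsub, hE, hn⟩, h2⟩
    have h3 : ¬(#E = 3 ∧ 3 ∈ E) := fun ⟨hc, h3⟩ => (hE 3 h3).ne hc
    exact ⟨⟨hsub, hn, h2, (forall_card_sdiff_lt_iff h2 h3).2 hE⟩, h3⟩

local notation "σ" => Equiv.toEmbedding (Equiv.swap (2 : ℕ) 3)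

theorem map_swap_map_swap (s : Finset ℕ) : (s.map σ).map σ = s := by
  rw [map_map, ← Equiv.trans_toEmbedding, Equiv.swap_swap, Equiv.refl_toEmbedding, map_refl]

theorem map_swap_erase_two_mem {n : ℕ} {E : Finset ℕ} (hE : E ∈ KSets n) (hcard : #E = 3)
    (h3 : 3 ∈ E) : (E.map σ).erase 2 ∈ (strictSchreierMax n).filter (#· = 2) := by
  obtain ⟨hsub, hn, -, hω⟩ := mem_KSets.1 hE
  have hge : ∀ x ∈ E, 2 ≤ x := fun x hx => one_lt_of_forall_card_sdiff_lt hω hx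
  have hn4 : 4 ≤ n := by
    have := card_le_card (show E ⊆ Icc 2 n from fun x hx =>
      mem_Icc.2 ⟨hge x hx, (mem_Icc.1 (hsub hx)).2⟩)
    simp only [Nat.card_Icc, hcard] at this
    omega
  have h2 : 2 ∈ E.map σ := mem_map_equiv.2 (by simpa [Equiv.swap_apply_left] using h3)
  have hbound : ∀ y ∈ (E.map σ).erase 2, 3 ≤ y ∧ y ≤ n := by
    intro y hy
    simp only [mem_erase, mem_map_equiv, Equiv.symm_swap, Equiv.swap_apply_def] at hy
    obtain ⟨hy2, hy⟩ := hy
    split_ifs at hy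
    · omega
    · omega
    · have := hge y hy; have := (mem_Icc.1 (hsub hy)).2; omega
  rw [mem_filter, mem_strictSchreierMax, card_erase_of_mem h2, card_map, hcard]
  refine ⟨⟨fun y hy => ?_, fun y hy => (hbound y hy).1, ?_⟩, rfl⟩
  · exact mem_Icc.2 ⟨by have := hbound y hy; omega, (hbound y hy).2⟩
  · rw [mem_erase, mem_map_equiv, Equiv.symm_swap,
      Equiv.swap_apply_of_ne_of_ne (by omega) (by omega)]
    exact ⟨by omega, hn⟩

theorem map_swap_insert_two_mem {n : ℕ} {S : Finset ℕ} (hS : S ∈ strictSchreierMax n)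
    (hcard : #S = 2) :
    (insert 2 S).map σ ∈ (KSets n).filter (fun E => #E = 3 ∧ 3 ∈ E) := by
  obtain ⟨hsub, hS, hn⟩ := mem_strictSchreierMax.1 hS
  have h2 : 2 ∉ S := fun h => by have := hS 2 h; omega
  have hn4 : 4 ≤ n := by
    have := card_le_card (show S ⊆ Icc 3 n from fun x hx =>
      mem_Icc.2 ⟨by have := hS x hx; omega, (mem_Icc.1 (hsub hx)).2⟩)
    simp only [Nat.card_Icc, hcard] at this
    omega
  have hbound : ∀ y ∈ (insert 2 S).map σ, 2 ≤ y ∧ y ≤ n := by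
    intro y hy
    simp only [mem_map_equiv, Equiv.symm_swap, Equiv.swap_apply_def, mem_insert] at hy
    split_ifs at hy
    · omega
    · omega
    · rcases hy with rfl | hy
      · omega
      · have := hS y hy; have := (mem_Icc.1 (hsub hy)).2; omega
  have hcard3 : #((insert 2 S).map σ) = 3 := by rw [card_map, card_insert_of_notMem h2, hcard]
  have h3 : 3 ∈ (insert 2 S).map σ := mem_map_equiv.2 (by simp [Equiv.swap_apply_right])
  rw [mem_filter, mem_KSets]
  refine ⟨⟨fun y hy => ?_, ?_, by omega, ?_⟩, hcard3, h3⟩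
  · exact mem_Icc.2 ⟨by have := hbound y hy; omega, (hbound y hy).2⟩
  · rw [mem_map_equiv, Equiv.symm_swap, Equiv.swap_apply_of_ne_of_ne (by omega) (by omega)]
    exact mem_insert_of_mem hn
  · exact (forall_card_sdiff_lt_iff_of_card_eq_three hcard3 h3).2 fun y hy => (hbound y hy).1

theorem card_filter_KSets_eq (n : ℕ) :
    #((KSets n).filter (fun E => #E = 3 ∧ 3 ∈ E)) =
      #((strictSchreierMax n).filter (#· = 2)) := by
  refine card_nbij' (fun E => (E.map σ).erase 2) (fun S => (insert 2 S).map σ)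
    (fun E hE => ?_) (fun S hS => ?_) (fun E hE => ?_) (fun S hS => ?_)
  · obtain ⟨hE, hcard, h3⟩ := mem_filter.1 hE
    exact map_swap_erase_two_mem hE hcard h3
  · obtain ⟨hS, hcard⟩ := mem_filter.1 hS
    exact map_swap_insert_two_mem hS hcard
  · have h2 : 2 ∈ E.map σ :=
      mem_map_equiv.2 (by simpa [Equiv.swap_apply_left] using (mem_filter.1 hE).2.2)
    simp only
    rw [insert_erase h2, map_swap_map_swap]
  · obtain ⟨hS, hcard⟩ := mem_filter.1 hS
    have h2 : 2 ∉ S := fun h => by have := (mem_strictSchreierMax.1 hS).2.1 2 h; omega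
    simp only
    rw [map_swap_map_swap, erase_insert h2]

theorem card_KSets (n : ℕ) : #(KSets n) = #(strictSchreierMax n) := by
  rw [← card_filter_add_card_filter_not (s := KSets n) (fun E => #E = 3 ∧ 3 ∈ E),
    ← card_filter_add_card_filter_not (s := strictSchreierMax n) (#· = 2),
    card_filter_KSets_eq, filter_KSets_eq]

theorem setOf_eq_coe_KSets (n : ℕ) :
    {E : Finset ℕ | ∃ h : E.Nonempty, (∀ x ∈ E, 0 < x) ∧
      E.max' h = n ∧ #(E \ {2, 3}) < E.min' h ∧ #E ≠ 2} = ↑(KSets n) := by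
  ext E
  simp only [Set.mem_ofPred_eq, mem_coe, mem_KSets]
  constructor
  · rintro ⟨hne, hpos, hmax, hmin, h2⟩
    rw [max'_eq_iff] at hmax
    rw [lt_min'_iff] at hmin
    exact ⟨fun x hx => mem_Icc.2 ⟨hpos x hx, hmax.2 x hx⟩, hmax.1, h2, hmin⟩
  · rintro ⟨hsub, hn, h2, hE⟩
    exact ⟨⟨n, hn⟩, fun x hx => (mem_Icc.1 (hsub hx)).1,
      (max'_eq_iff _ _ _).2 ⟨hn, fun x hx => (mem_Icc.1 (hsub hx)).2⟩,
      (lt_min'_iff _ _).2 hE, h2⟩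

theorem stmt6_general (n : ℕ) :
    {E : Finset ℕ | ∃ h : E.Nonempty, (∀ x ∈ E, 0 < x) ∧
      E.max' h = n + 1 ∧ (E \ {2, 3}).card < E.min' h ∧ E.card ≠ 2}.ncard
      = Nat.fib n := by
  rw [setOf_eq_coe_KSets, Set.ncard_coe_finset, card_KSets, card_strictSchreierMax_succ]

/-- The number of finite sets `E` of positive integers with `max E = n+1`,
`min E > ω_{2,3}(E)`, and `|E| ≠ 2` equals `F n`. -/
theorem stmt6 (n : ℕ) (hn : 1 ≤ n) :
    {E : Finset ℕ | ∃ h : E.Nonempty, (∀ x ∈ E, 0 < x) ∧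
      E.max' h = n + 1 ∧ (E \ {2, 3}).card < E.min' h ∧ E.card ≠ 2}.ncard
      = Nat.fib n :=
  stmt6_general n
end

section
/- The Fibonacci-count recurrence for K_n: for n ≥ 3, |K_{n+1}| = |K_n| + |K_{n-1}|, where K_m is the collection of finite sets E of positive integers with max E = m, min E > ω_{2,3}(E), and |E| ≠ 2. -/
/-- `K m`: finite sets of positive integers with `max E = m`, `min E > ω_{2,3}(E)`,
and `|E| ≠ 2`. -/
def K (m : ℕ) : Set (Finset ℕ) :=
  {E : Finset ℕ | ∃ h : E.Nonempty, (∀ x ∈ E, 0 < x) ∧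
    E.max' h = m ∧ (E \ {2, 3}).card < E.min' h ∧ E.card ≠ 2}


def Fat (m : ℕ) : Set (Finset ℕ) :=
  {E : Finset ℕ | ∃ h : E.Nonempty, E.max' h = m ∧ E.card < E.min' h}

lemma max'_eq_of {E : Finset ℕ} {m : ℕ} (h : E.Nonempty) (hm : m ∈ E)
    (hle : ∀ x ∈ E, x ≤ m) : E.max' h = m :=
  le_antisymm (Finset.max'_le _ _ _ hle) (Finset.le_max' _ _ hm)

lemma fat_subset (m : ℕ) : Fat m ⊆ ↑((Finset.range (m+1)).powerset) := by
  rintro E ⟨h, hmax, -⟩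
  simp only [Finset.mem_coe, Finset.mem_powerset]
  intro x hx
  rw [Finset.mem_range, Nat.lt_succ_iff, ← hmax]
  exact Finset.le_max' _ _ hx

lemma fat_finite (m : ℕ) : (Fat m).Finite :=
  Set.Finite.subset ((Finset.range (m+1)).powerset.finite_toSet) (fat_subset m)

lemma fat_two_mul_card {M : ℕ} {F : Finset ℕ} (hF : F ∈ Fat M) : 2 * F.card ≤ M := by
  obtain ⟨h, hmax, hmin⟩ := hF
  have hsub : F ⊆ Finset.Icc (F.min' h) M := by
    intro x hx
    exact Finset.mem_Icc.2 ⟨Finset.min'_le _ _ hx, hmax ▸ Finset.le_max' _ _ hx⟩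
  have h1 := Finset.card_le_card hsub
  rw [Nat.card_Icc] at h1
  have h2 : F.min' h ≤ M := hmax ▸ Finset.min'_le _ _ (Finset.max'_mem _ h)
  omega

lemma fat_f_mem {m : ℕ} {E : Finset ℕ} (hE : E ∈ Fat (m+1)) :
    insert (m+2) (E.erase (m+1)) ∈ Fat (m+2) ∧ m+1 ∉ insert (m+2) (E.erase (m+1)) := by
  obtain ⟨h, hmax, hmin⟩ := hE
  have hm1 : m+1 ∈ E := hmax ▸ Finset.max'_mem _ h
  have hle : ∀ x ∈ E, x ≤ m+1 := fun x hx => hmax ▸ Finset.le_max' _ _ hx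
  have hne : (insert (m+2) (E.erase (m+1))).Nonempty := Finset.insert_nonempty _ _
  have hnm : (m+2) ∉ E.erase (m+1) := fun hc => by
    have := hle _ (Finset.mem_of_mem_erase hc); omega
  have hcard : (insert (m+2) (E.erase (m+1))).card = E.card := by
    rw [Finset.card_insert_of_notMem hnm, Finset.card_erase_of_mem hm1]
    have := Finset.card_pos.2 h; omega
  refine ⟨⟨hne, ?_, ?_⟩, ?_⟩
  · refine max'_eq_of hne (Finset.mem_insert_self _ _) ?_
    intro x hx
    rcases Finset.mem_insert.1 hx with rfl | hx
    · exact le_rfl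
    · have := hle _ (Finset.mem_of_mem_erase hx); omega
  · rw [hcard]
    have : E.min' h ≤ (insert (m+2) (E.erase (m+1))).min' hne := by
      apply Finset.le_min'
      intro y hy
      rcases Finset.mem_insert.1 hy with rfl | hy
      · have : E.min' h ≤ m+1 := le_trans (Finset.min'_le _ _ hm1) le_rfl; omega
      · exact Finset.min'_le _ _ (Finset.mem_of_mem_erase hy)
    omega
  · intro hc
    rcases Finset.mem_insert.1 hc with hc | hc
    · omega
    · exact (Finset.notMem_erase _ _) hc

lemma fat_g_mem {m : ℕ} {E : Finset ℕ} (hE : E ∈ Fat m) :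
    insert (m+2) (E.image (· + 1)) ∈ Fat (m+2) ∧ m+1 ∈ insert (m+2) (E.image (· + 1)) := by
  obtain ⟨h, hmax, hmin⟩ := hE
  have hm1 : m ∈ E := hmax ▸ Finset.max'_mem _ h
  have hle : ∀ x ∈ E, x ≤ m := fun x hx => hmax ▸ Finset.le_max' _ _ hx
  have hne : (insert (m+2) (E.image (· + 1))).Nonempty := Finset.insert_nonempty _ _
  have hnm : (m+2) ∉ E.image (· + 1) := by
    intro hc
    obtain ⟨x, hx, hx2⟩ := Finset.mem_image.1 hc
    have := hle _ hx; omega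
  have hcard : (insert (m+2) (E.image (· + 1))).card = E.card + 1 := by
    rw [Finset.card_insert_of_notMem hnm,
      Finset.card_image_of_injective _ (fun a b hab => by omega)]
  refine ⟨⟨hne, ?_, ?_⟩, ?_⟩
  · refine max'_eq_of hne (Finset.mem_insert_self _ _) ?_
    intro x hx
    rcases Finset.mem_insert.1 hx with rfl | hx
    · exact le_rfl
    · obtain ⟨y, hy, rfl⟩ := Finset.mem_image.1 hx
      have := hle _ hy; omega
  · rw [hcard]
    have hmle : E.min' h ≤ m := le_trans (Finset.min'_le _ _ hm1) le_rfl
    have : E.min' h + 1 ≤ (insert (m+2) (E.image (· + 1))).min' hne := by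
      apply Finset.le_min'
      intro y hy
      rcases Finset.mem_insert.1 hy with rfl | hy
      · omega
      · obtain ⟨x, hx, rfl⟩ := Finset.mem_image.1 hy
        have := Finset.min'_le _ _ hx; omega
    omega
  · exact Finset.mem_insert.2 (Or.inr (Finset.mem_image.2 ⟨m, hm1, rfl⟩))

lemma fat_f_inj {m : ℕ} : Set.InjOn (fun E => insert (m+2) (E.erase (m+1))) (Fat (m+1)) := by
  intro E1 h1 E2 h2 heq
  simp only at heq
  have key : ∀ E : Finset ℕ, E ∈ Fat (m+1) →
      insert (m+1) ((insert (m+2) (E.erase (m+1))).erase (m+2)) = E := by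
    rintro E ⟨h, hmax, -⟩
    have hm1 : E.max' h ∈ E := Finset.max'_mem _ h
    rw [hmax] at hm1
    have hnm : (m+2) ∉ E.erase (m+1) := fun hc => by
      have := hmax ▸ Finset.le_max' _ _ (Finset.mem_of_mem_erase hc); omega
    rw [Finset.erase_insert hnm, Finset.insert_erase hm1]
  rw [← key E1 h1, ← key E2 h2, heq]

lemma fat_g_inj {m : ℕ} : Set.InjOn (fun E => insert (m+2) (E.image (· + 1))) (Fat m) := by
  intro E1 h1 E2 h2 heq
  simp only at heq
  have key : ∀ E : Finset ℕ, E ∈ Fat m →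
      (insert (m+2) (E.image (· + 1))).erase (m+2) = E.image (· + 1) := by
    rintro E ⟨h, hmax, -⟩
    have hnm : (m+2) ∉ E.image (· + 1) := by
      intro hc
      obtain ⟨x, hx, hx2⟩ := Finset.mem_image.1 hc
      have := hmax ▸ Finset.le_max' _ _ hx; omega
    rw [Finset.erase_insert hnm]
  have himg : E1.image (· + 1) = E2.image (· + 1) := by
    rw [← key E1 h1, ← key E2 h2, heq]
  exact Finset.image_injective (fun a b hab => by omega) himg

lemma fat_cover {m : ℕ} (hm : 1 ≤ m) (F : Finset ℕ) (hF : F ∈ Fat (m+2)) :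
    (m+1 ∉ F ∧ F ∈ (fun E => insert (m+2) (E.erase (m+1))) '' (Fat (m+1))) ∨
    (m+1 ∈ F ∧ F ∈ (fun E => insert (m+2) (E.image (· + 1))) '' (Fat m)) := by
  have h2c := fat_two_mul_card hF
  obtain ⟨h, hmax, hmin⟩ := hF
  have hm2 : m+2 ∈ F := hmax ▸ Finset.max'_mem _ h
  have hle : ∀ x ∈ F, x ≤ m+2 := fun x hx => hmax ▸ Finset.le_max' _ _ hx
  have hgt : ∀ x ∈ F, F.card < x := fun x hx =>
    lt_of_lt_of_le hmin (Finset.min'_le _ _ hx)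
  by_cases hmem : m+1 ∈ F
  · right
    refine ⟨hmem, ?_⟩
    have hcard2 : 2 ≤ F.card := Finset.one_lt_card.2 ⟨m+1, hmem, m+2, hm2, by omega⟩
    have hge3 : ∀ x ∈ F, 3 ≤ x := fun x hx => by have := hgt x hx; omega
    set E := (F.erase (m+2)).image (· - 1) with hE
    have hmE : m ∈ E := by
      apply Finset.mem_image.2
      exact ⟨m+1, Finset.mem_erase.2 ⟨by omega, hmem⟩, rfl⟩
    have hEne : E.Nonempty := ⟨m, hmE⟩
    have hEle : ∀ y ∈ E, y ≤ m := by
      intro y hy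
      obtain ⟨x, hx, rfl⟩ := Finset.mem_image.1 hy
      have h1 := hle _ (Finset.mem_of_mem_erase hx)
      have h2 := (Finset.mem_erase.1 hx).1
      omega
    have hEcard : E.card = F.card - 1 := by
      rw [hE, Finset.card_image_of_injOn, Finset.card_erase_of_mem hm2]
      intro a ha b hb hab
      simp only at hab
      have := hge3 _ (Finset.mem_of_mem_erase ha)
      have := hge3 _ (Finset.mem_of_mem_erase hb)
      omega
    have hEgt : ∀ y ∈ E, E.card < y := by
      intro y hy
      obtain ⟨x, hx, rfl⟩ := Finset.mem_image.1 hy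
      have := hgt _ (Finset.mem_of_mem_erase hx)
      omega
    refine ⟨E, ⟨hEne, max'_eq_of hEne hmE hEle, hEgt _ (Finset.min'_mem _ hEne)⟩, ?_⟩
    simp only
    rw [hE, Finset.image_image]
    have : (F.erase (m+2)).image ((· + 1) ∘ (· - 1)) = F.erase (m+2) := by
      rw [show ((· + 1) ∘ (· - 1) : ℕ → ℕ) = fun x => x - 1 + 1 from rfl]
      rw [Finset.image_congr (g := id) ?_, Finset.image_id]
      intro x hx
      have := hge3 _ (Finset.mem_of_mem_erase hx)
      simp; omega
    rw [this, Finset.insert_erase hm2]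
  · left
    refine ⟨hmem, ?_⟩
    set E := insert (m+1) (F.erase (m+2)) with hE
    have hnm1 : m+1 ∉ F.erase (m+2) := fun hc => hmem (Finset.mem_of_mem_erase hc)
    have hEne : E.Nonempty := Finset.insert_nonempty _ _
    have hEcard : E.card = F.card := by
      rw [hE, Finset.card_insert_of_notMem hnm1, Finset.card_erase_of_mem hm2]
      have := Finset.card_pos.2 h; omega
    have hEle : ∀ y ∈ E, y ≤ m+1 := by
      intro y hy
      rcases Finset.mem_insert.1 hy with rfl | hy
      · exact le_rfl
      · have := hle _ (Finset.mem_of_mem_erase hy)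
        have := (Finset.mem_erase.1 hy).1
        omega
    have hEgt : ∀ y ∈ E, E.card < y := by
      intro y hy
      rcases Finset.mem_insert.1 hy with rfl | hy
      · omega
      · rw [hEcard]; exact hgt _ (Finset.mem_of_mem_erase hy)
    refine ⟨E, ⟨hEne, max'_eq_of hEne (Finset.mem_insert_self _ _) hEle,
      hEgt _ (Finset.min'_mem _ hEne)⟩, ?_⟩
    simp only
    rw [hE, Finset.erase_insert hnm1, Finset.insert_erase hm2]

theorem fat_rec (m : ℕ) (hm : 1 ≤ m) :
    (Fat (m+2)).ncard = (Fat (m+1)).ncard + (Fat m).ncard := by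
  have hsplit : Fat (m+2) =
      ((fun E => insert (m+2) (E.erase (m+1))) '' (Fat (m+1))) ∪
      ((fun E => insert (m+2) (E.image (· + 1))) '' (Fat m)) := by
    ext F
    constructor
    · intro hF
      rcases fat_cover hm F hF with ⟨-, h⟩ | ⟨-, h⟩
      · exact Or.inl h
      · exact Or.inr h
    · rintro (⟨E, hE, rfl⟩ | ⟨E, hE, rfl⟩)
      · exact (fat_f_mem hE).1
      · exact (fat_g_mem hE).1
  have hdisj : Disjoint ((fun E => insert (m+2) (E.erase (m+1))) '' (Fat (m+1)))
      ((fun E => insert (m+2) (E.image (· + 1))) '' (Fat m)) := by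
    rw [Set.disjoint_left]
    rintro F ⟨E1, hE1, rfl⟩ ⟨E2, hE2, heq⟩
    have h1 := (fat_f_mem hE1).2
    have h2 := (fat_g_mem hE2).2
    simp only at heq
    rw [heq] at h2
    exact h1 h2
  rw [hsplit, Set.ncard_union_eq hdisj
      (Set.Finite.image _ (fat_finite _)) (Set.Finite.image _ (fat_finite _)),
    Set.ncard_image_of_injOn fat_f_inj, Set.ncard_image_of_injOn fat_g_inj]

lemma min'_eq_of {E : Finset ℕ} {a : ℕ} (h : E.Nonempty) (hm : a ∈ E)
    (hle : ∀ x ∈ E, a ≤ x) : E.min' h = a :=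
  le_antisymm (Finset.min'_le _ _ hm) (Finset.le_min' _ _ _ hle)

lemma K_finite (m : ℕ) : (K m).Finite := by
  apply Set.Finite.subset ((Finset.range (m+1)).powerset.finite_toSet)
  rintro E ⟨h, -, hmax, -⟩
  simp only [Finset.mem_coe, Finset.mem_powerset]
  intro x hx
  rw [Finset.mem_range, Nat.lt_succ_iff, ← hmax]
  exact Finset.le_max' _ _ hx

lemma classifyK {m : ℕ} {E : Finset ℕ} (hE : E ∈ K m) :
    E = {m} ∨ (4 ≤ m ∧ E = {2, 3, m}) ∨ (∃ a, 4 ≤ a ∧ a < m ∧ E = {3, a, m}) ∨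
    (∃ h : E.Nonempty, 3 ≤ E.card ∧ E.card < E.min' h ∧ ∀ x ∈ E, 4 ≤ x) := by
  obtain ⟨h, hpos, hmax, hω, hcard2⟩ := hE
  have hmmem : m ∈ E := hmax ▸ Finset.max'_mem _ h
  have hle : ∀ x ∈ E, x ≤ m := fun x hx => hmax ▸ Finset.le_max' _ _ hx
  have hcard1 : 1 ≤ E.card := Finset.card_pos.2 h
  by_cases hc1 : E.card = 1
  · obtain ⟨a, ha⟩ := Finset.card_eq_one.1 hc1
    left
    rw [ha] at hmmem ⊢
    rw [Finset.mem_singleton.1 hmmem]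
  have hc3 : 3 ≤ E.card := by omega
  have hsd : (E \ {2,3}).card + (E ∩ {2,3}).card = E.card :=
    Finset.card_sdiff_add_card_inter E {2,3}
  have hint : (E ∩ {2,3}).card ≤ 2 := by
    have h1 : E ∩ {2,3} ⊆ {2,3} := Finset.inter_subset_right
    have := Finset.card_le_card h1
    simpa using this
  by_cases h2 : 2 ∈ E
  · right; left
    have hm2 : E.min' h ≤ 2 := Finset.min'_le _ _ h2
    have hsd1 : (E \ {2,3}).card = 1 := by omega
    have hcE : E.card = 3 := by omega
    have hintc : 2 ≤ (E ∩ {2,3}).card := by omega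
    have h23 : E ∩ {2,3} = {2,3} := by
      apply Finset.eq_of_subset_of_card_le Finset.inter_subset_right
      simpa using hintc
    obtain ⟨c, hc⟩ := Finset.card_eq_one.1 hsd1
    have hEeq : E = {c} ∪ {2,3} := by
      conv_lhs => rw [← Finset.sdiff_union_inter E {2,3}, h23, hc]
    have hcmem : c ∈ E \ {2,3} := hc ▸ Finset.mem_singleton_self c
    have hcE' : c ∈ E := Finset.mem_sdiff.1 hcmem |>.1
    have hcn : c ≠ 2 ∧ c ≠ 3 := by
      have := (Finset.mem_sdiff.1 hcmem).2
      simp only [Finset.mem_insert, Finset.mem_singleton] at this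
      tauto
    have hmin2 : 2 ≤ E.min' h := by omega
    have hc4 : 4 ≤ c := by
      have := Finset.min'_le _ _ hcE'
      omega
    have hcm : c ≤ m := hle _ hcE'
    have hmc : m = c := by
      rw [hEeq] at hmmem
      simp only [Finset.mem_union, Finset.mem_insert, Finset.mem_singleton] at hmmem
      rcases hmmem with rfl | rfl | rfl
      · rfl
      · omega
      · omega
    refine ⟨by omega, ?_⟩
    rw [hEeq, hmc]
    ext x
    simp only [Finset.mem_union, Finset.mem_insert, Finset.mem_singleton]
    tauto
  · by_cases h3 : 3 ∈ E
    · right; right; left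
      have hm3 : E.min' h ≤ 3 := Finset.min'_le _ _ h3
      have hsd3 : E \ {2,3} = E.erase 3 := by
        ext x
        simp only [Finset.mem_sdiff, Finset.mem_insert, Finset.mem_singleton, Finset.mem_erase]
        constructor
        · rintro ⟨hx, hx2⟩; exact ⟨fun hc => hx2 (Or.inr hc), hx⟩
        · rintro ⟨hx3, hx⟩
          refine ⟨hx, ?_⟩
          rintro (rfl | rfl)
          · exact h2 hx
          · exact hx3 rfl
      have hec : (E.erase 3).card = E.card - 1 := Finset.card_erase_of_mem h3
      rw [hsd3, hec] at hω
      have hcE : E.card = 3 := by omega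
      have hmin3 : E.min' h = 3 := by omega
      have hge3 : ∀ x ∈ E, 3 ≤ x := fun x hx => hmin3 ▸ Finset.min'_le _ _ hx
      have hec2 : (E.erase 3).card = 2 := by omega
      obtain ⟨a, b, hab, habE⟩ := Finset.card_eq_two.1 hec2
      have haE : a ∈ E := Finset.mem_of_mem_erase (habE ▸ (by simp : a ∈ ({a,b}:Finset ℕ)))
      have hbE : b ∈ E := Finset.mem_of_mem_erase (habE ▸ (by simp : b ∈ ({a,b}:Finset ℕ)))
      have ha3 : a ≠ 3 := (Finset.mem_erase.1 (habE ▸ (by simp : a ∈ ({a,b}:Finset ℕ)))).1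
      have hb3 : b ≠ 3 := (Finset.mem_erase.1 (habE ▸ (by simp : b ∈ ({a,b}:Finset ℕ)))).1
      have ha4 : 4 ≤ a := by have := hge3 a haE; omega
      have hb4 : 4 ≤ b := by have := hge3 b hbE; omega
      have hEeq : E = {3, a, b} := by
        conv_lhs => rw [← Finset.insert_erase h3, habE]
      have ham : a ≤ m := hle _ haE
      have hbm : b ≤ m := hle _ hbE
      have hmE : m = 3 ∨ m = a ∨ m = b := by
        rw [hEeq] at hmmem
        simpa using hmmem
      rcases hmE with hm' | hm' | hm'
      · omega
      · refine ⟨b, hb4, by omega, ?_⟩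
        rw [hEeq, hm']
        ext x; simp only [Finset.mem_insert, Finset.mem_singleton]; tauto
      · exact ⟨a, ha4, by omega, by rw [hEeq, hm']⟩
    · right; right; right
      have hsdE : E \ {2,3} = E := by
        ext x
        simp only [Finset.mem_sdiff, Finset.mem_insert, Finset.mem_singleton]
        constructor
        · exact fun hx => hx.1
        · intro hx
          refine ⟨hx, ?_⟩
          rintro (rfl | rfl)
          · exact h2 hx
          · exact h3 hx
      rw [hsdE] at hω
      refine ⟨h, hc3, hω, ?_⟩
      intro x hx
      have := Finset.min'_le _ _ hx
      omega

def psi (E : Finset ℕ) : Finset ℕ :=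
  if E.card = 3 then (if 2 ∈ E then E.erase 2 else if 3 ∈ E then E.erase 3 else E) else E

lemma card_B {m : ℕ} (hm : 4 ≤ m) : ({2,3,m} : Finset ℕ).card = 3 := by
  rw [Finset.card_insert_of_notMem (by simp; omega),
    Finset.card_insert_of_notMem (by simp; omega), Finset.card_singleton]

lemma card_C {a m : ℕ} (ha : 4 ≤ a) (ham : a < m) : ({3,a,m} : Finset ℕ).card = 3 := by
  rw [Finset.card_insert_of_notMem (by simp; omega),
    Finset.card_insert_of_notMem (by simp; omega), Finset.card_singleton]

lemma card_2elt {a m : ℕ} (h : a ≠ m) : ({a,m} : Finset ℕ).card = 2 := by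
  rw [Finset.card_insert_of_notMem (by simpa using h), Finset.card_singleton]

lemma psi_A {m : ℕ} : psi {m} = {m} := by
  unfold psi
  rw [if_neg (by simp)]

lemma psi_B {m : ℕ} (hm : 4 ≤ m) : psi {2,3,m} = {3,m} := by
  unfold psi
  rw [if_pos (card_B hm), if_pos (by simp)]
  rw [show ({2,3,m} : Finset ℕ) = insert 2 {3,m} from rfl,
    Finset.erase_insert (by simp; omega)]

lemma psi_C {a m : ℕ} (ha : 4 ≤ a) (ham : a < m) : psi {3,a,m} = {a,m} := by
  unfold psi
  rw [if_pos (card_C ha ham), if_neg (by simp; omega), if_pos (by simp)]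
  rw [show ({3,a,m} : Finset ℕ) = insert 3 {a,m} from rfl,
    Finset.erase_insert (by simp; omega)]

lemma psi_D {E : Finset ℕ} (h4 : ∀ x ∈ E, 4 ≤ x) : psi E = E := by
  unfold psi
  split_ifs with h1 h2 h3
  · exact absurd (h4 2 h2) (by omega)
  · exact absurd (h4 3 h3) (by omega)
  · rfl
  · rfl

lemma A_mem_K {m : ℕ} (hm : 2 ≤ m) : ({m} : Finset ℕ) ∈ K m := by
  refine ⟨Finset.singleton_nonempty m, by simp; omega, Finset.max'_singleton m, ?_, by simp⟩
  rw [Finset.min'_singleton]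
  have hsub : ({m} : Finset ℕ) \ {2,3} ⊆ {m} := Finset.sdiff_subset
  have hc := Finset.card_le_card hsub
  simp only [Finset.card_singleton] at hc
  by_cases h4 : 4 ≤ m
  · omega
  · interval_cases m <;> decide

lemma B_mem_K {m : ℕ} (hm : 4 ≤ m) : ({2,3,m} : Finset ℕ) ∈ K m := by
  have hne : ({2,3,m} : Finset ℕ).Nonempty := ⟨2, by simp⟩
  refine ⟨hne, ?_, ?_, ?_, ?_⟩
  · intro x hx; simp only [Finset.mem_insert, Finset.mem_singleton] at hx
    rcases hx with rfl | rfl | rfl <;> omega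
  · refine max'_eq_of hne (by simp) ?_
    intro x hx; simp only [Finset.mem_insert, Finset.mem_singleton] at hx
    rcases hx with rfl | rfl | rfl <;> omega
  · have hmin : ({2,3,m} : Finset ℕ).min' hne = 2 := by
      refine min'_eq_of hne (by simp) ?_
      intro x hx; simp only [Finset.mem_insert, Finset.mem_singleton] at hx
      rcases hx with rfl | rfl | rfl <;> omega
    rw [hmin]
    have hsd : ({2,3,m} : Finset ℕ) \ {2,3} = {m} := by
      ext x
      simp only [Finset.mem_sdiff, Finset.mem_insert, Finset.mem_singleton]
      constructor
      · rintro ⟨rfl | rfl | rfl, hx2⟩ <;> tauto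
      · rintro rfl; constructor
        · tauto
        · rintro (rfl | rfl) <;> omega
    rw [hsd, Finset.card_singleton]; omega
  · rw [card_B hm]; omega

lemma C_mem_K {a m : ℕ} (ha : 4 ≤ a) (ham : a < m) : ({3,a,m} : Finset ℕ) ∈ K m := by
  have hne : ({3,a,m} : Finset ℕ).Nonempty := ⟨3, by simp⟩
  refine ⟨hne, ?_, ?_, ?_, ?_⟩
  · intro x hx; simp only [Finset.mem_insert, Finset.mem_singleton] at hx
    rcases hx with rfl | rfl | rfl <;> omega
  · refine max'_eq_of hne (by simp) ?_
    intro x hx; simp only [Finset.mem_insert, Finset.mem_singleton] at hx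
    rcases hx with rfl | rfl | rfl <;> omega
  · have hmin : ({3,a,m} : Finset ℕ).min' hne = 3 := by
      refine min'_eq_of hne (by simp) ?_
      intro x hx; simp only [Finset.mem_insert, Finset.mem_singleton] at hx
      rcases hx with rfl | rfl | rfl <;> omega
    rw [hmin]
    have hsd : ({3,a,m} : Finset ℕ) \ {2,3} = {a,m} := by
      ext x
      simp only [Finset.mem_sdiff, Finset.mem_insert, Finset.mem_singleton]
      constructor
      · rintro ⟨rfl | rfl | rfl, hx2⟩ <;> tauto
      · rintro (rfl | rfl) <;> exact ⟨by tauto, by rintro (rfl | rfl) <;> omega⟩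
    rw [hsd, card_2elt (by omega)]; omega
  · rw [card_C ha ham]; omega

lemma D_mem_K {m : ℕ} {E : Finset ℕ} (h : E.Nonempty) (hmax : E.max' h = m)
    (hc3 : 3 ≤ E.card) (hmin : E.card < E.min' h) : E ∈ K m := by
  have hge4 : ∀ x ∈ E, 4 ≤ x := by
    intro x hx
    have := Finset.min'_le _ _ hx
    omega
  have hsd : E \ {2,3} = E := by
    ext x
    simp only [Finset.mem_sdiff, Finset.mem_insert, Finset.mem_singleton]
    constructor
    · exact fun hx => hx.1
    · intro hx
      exact ⟨hx, by rintro (rfl | rfl) <;> exact absurd (hge4 _ hx) (by omega)⟩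
  exact ⟨h, fun x hx => by have := hge4 x hx; omega, hmax, by rw [hsd]; exact hmin, by omega⟩

lemma A_mem_fat {m : ℕ} (hm : 2 ≤ m) : ({m} : Finset ℕ) ∈ Fat m := by
  refine ⟨Finset.singleton_nonempty m, Finset.max'_singleton m, ?_⟩
  rw [Finset.min'_singleton, Finset.card_singleton]; omega

lemma two_mem_fat {a m : ℕ} (ha : 3 ≤ a) (ham : a < m) : ({a,m} : Finset ℕ) ∈ Fat m := by
  have hne : ({a,m} : Finset ℕ).Nonempty := ⟨a, by simp⟩
  refine ⟨hne, ?_, ?_⟩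
  · refine max'_eq_of hne (by simp) ?_
    intro x hx; simp only [Finset.mem_insert, Finset.mem_singleton] at hx
    rcases hx with rfl | rfl <;> omega
  · have hmin : ({a,m} : Finset ℕ).min' hne = a := by
      refine min'_eq_of hne (by simp) ?_
      intro x hx; simp only [Finset.mem_insert, Finset.mem_singleton] at hx
      rcases hx with rfl | rfl <;> omega
    rw [hmin, card_2elt (by omega)]; omega

theorem K_card_eq_fat (m : ℕ) (hm : 2 ≤ m) : (K m).ncard = (Fat m).ncard := by
  have himg : psi '' K m = Fat m := by
    ext F
    constructor
    · rintro ⟨E, hE, rfl⟩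
      rcases classifyK hE with rfl | ⟨hm4, rfl⟩ | ⟨a, ha4, ham, rfl⟩ | ⟨h, hc3, hmin, hge4⟩
      · rw [psi_A]; exact A_mem_fat hm
      · rw [psi_B hm4]; exact two_mem_fat (by omega) (by omega)
      · rw [psi_C ha4 ham]; exact two_mem_fat (by omega) ham
      · rw [psi_D hge4]
        obtain ⟨h', _, hmax, _, _⟩ := hE
        exact ⟨h', hmax, hmin⟩
    · intro hF
      obtain ⟨h, hmax, hmin⟩ := hF
      have hmem : m ∈ F := hmax ▸ Finset.max'_mem _ h
      by_cases hc1 : F.card = 1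
      · obtain ⟨c, rfl⟩ := Finset.card_eq_one.1 hc1
        obtain rfl : c = m := (Finset.mem_singleton.1 hmem).symm
        exact ⟨_, A_mem_K hm, psi_A⟩
      by_cases hc2 : F.card = 2
      · have hlt : F.min' h < F.max' h := Finset.min'_lt_max'_of_card _ (by omega)
        have hamem : F.min' h ∈ F := Finset.min'_mem _ h
        have ha3 : 3 ≤ F.min' h := by omega
        have ham : F.min' h < m := hmax ▸ hlt
        have hFeq : F = {F.min' h, m} := by
          refine (Finset.eq_of_subset_of_card_le ?_ ?_).symm
          · intro x hx
            simp only [Finset.mem_insert, Finset.mem_singleton] at hx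
            rcases hx with rfl | rfl
            · exact hamem
            · exact hmem
          · rw [hc2, card_2elt (by omega)]
        by_cases ha4 : 4 ≤ F.min' h
        · exact ⟨{3, F.min' h, m}, C_mem_K ha4 ham, by rw [psi_C ha4 ham, ← hFeq]⟩
        · have ha3' : F.min' h = 3 := by omega
          rw [ha3'] at hFeq ham
          exact ⟨{2,3,m}, B_mem_K (by omega), by rw [psi_B (by omega), ← hFeq]⟩
      · have hc3 : 3 ≤ F.card := by have := Finset.card_pos.2 h; omega
        exact ⟨F, D_mem_K h hmax hc3 hmin,
          psi_D (fun x hx => by have := Finset.min'_le _ _ hx; omega)⟩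
  have hinj : Set.InjOn psi (K m) := by
    intro E1 h1 E2 h2 heq
    rcases classifyK h1 with rfl | ⟨hm4, rfl⟩ | ⟨a, ha4, ham, rfl⟩ | ⟨hne1, hc31, hmin1, hge41⟩ <;>
      rcases classifyK h2 with rfl | ⟨hm4', rfl⟩ | ⟨b, hb4, hbm, rfl⟩ | ⟨hne2, hc32, hmin2, hge42⟩
    · rfl
    · rw [psi_A, psi_B hm4'] at heq
      have := congrArg Finset.card heq
      rw [Finset.card_singleton, card_2elt (by omega)] at this; omega
    · rw [psi_A, psi_C hb4 hbm] at heq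
      have := congrArg Finset.card heq
      rw [Finset.card_singleton, card_2elt (by omega)] at this; omega
    · rw [psi_A, psi_D hge42] at heq
      have := congrArg Finset.card heq
      rw [Finset.card_singleton] at this; omega
    · rw [psi_A, psi_B hm4] at heq
      have := congrArg Finset.card heq
      rw [Finset.card_singleton, card_2elt (by omega)] at this; omega
    · rfl
    · rw [psi_B hm4, psi_C hb4 hbm] at heq
      have h3 : (3:ℕ) ∈ ({b, m} : Finset ℕ) := heq ▸ (by simp)
      simp only [Finset.mem_insert, Finset.mem_singleton] at h3; omega
    · rw [psi_B hm4, psi_D hge42] at heq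
      have h3 : (3:ℕ) ∈ E2 := heq ▸ (by simp)
      have := hge42 3 h3; omega
    · rw [psi_A, psi_C ha4 ham] at heq
      have := congrArg Finset.card heq
      rw [Finset.card_singleton, card_2elt (by omega)] at this; omega
    · rw [psi_B hm4', psi_C ha4 ham] at heq
      have h3 : (3:ℕ) ∈ ({a, m} : Finset ℕ) := heq ▸ (by simp)
      simp only [Finset.mem_insert, Finset.mem_singleton] at h3; omega
    · rw [psi_C ha4 ham, psi_C hb4 hbm] at heq
      have hab : a ∈ ({b, m} : Finset ℕ) := heq ▸ (by simp)
      simp only [Finset.mem_insert, Finset.mem_singleton] at hab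
      rcases hab with rfl | rfl
      · rfl
      · omega
    · rw [psi_C ha4 ham, psi_D hge42] at heq
      have := congrArg Finset.card heq
      rw [card_2elt (by omega)] at this; omega
    · rw [psi_A, psi_D hge41] at heq
      have := congrArg Finset.card heq
      rw [Finset.card_singleton] at this; omega
    · rw [psi_B hm4', psi_D hge41] at heq
      have h3 : (3:ℕ) ∈ E1 := heq ▸ (by simp)
      have := hge41 3 h3; omega
    · rw [psi_C hb4 hbm, psi_D hge41] at heq
      have := congrArg Finset.card heq
      rw [card_2elt (by omega)] at this; omega
    · rwa [psi_D hge41, psi_D hge42] at heq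
  rw [← himg, Set.ncard_image_of_injOn hinj]


theorem stmt7 (n : ℕ) (hn : n ≥ 3) :
    (K (n + 1)).ncard = (K n).ncard + (K (n - 1)).ncard := by
  obtain ⟨k, rfl⟩ : ∃ k, n = k + 3 := ⟨n - 3, by omega⟩
  rw [show k + 3 + 1 = k + 2 + 2 from by omega, show k + 3 = k + 2 + 1 from by omega,
    show k + 2 + 1 - 1 = k + 2 from by omega]
  rw [K_card_eq_fat (k+2+2) (by omega), K_card_eq_fat (k+2+1) (by omega),
    K_card_eq_fat (k+2) (by omega)]
  exact fat_rec (k+2) (by omega)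
end

section
/- For integers n ≥ 1, the number of nonempty subsets E of {1,...,n} with n ∉ E and min E > |E| equals ∑_{k=1}^{n-1} ∑_{j=0}^{k-2} C(n-k-1, j), and this double sum equals F_n - 1. -/
/-!
The sets `E ⊆ {1, …, m}` with `#E < min E` and `#E = c` are exactly the `c`-subsets of
`{c + 1, …, m}`, so there are `∑ c, C(m - c, c) = F (m + 1)` of them (the shallow diagonals of
Pascal's triangle), one of which is `∅`. After the reflection `k ↦ m - k`, exchanging the two sums
and the hockey-stick identity turn the double sum into the same diagonal sum without its `c = 0`
term.
-/

open Finset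

namespace Nat

theorem fib_add_one_eq_sum_range_choose (m : ℕ) :
    fib (m + 1) = ∑ c ∈ range (m + 1), (m - c).choose c := by
  rw [fib_succ_eq_sum_choose, ← Finset.Nat.sum_antidiagonal_swap]
  simp only [Prod.fst_swap, Prod.snd_swap]
  rw [Finset.Nat.sum_antidiagonal_eq_sum_range_succ (fun i j => j.choose i)]

theorem sum_range_choose_eq_choose_add_one (N j : ℕ) :
    ∑ i ∈ range N, i.choose j = N.choose (j + 1) := by
  induction N with
  | zero => simp
  | succ N ih => rw [sum_range_succ, ih, choose_succ_succ, add_comm]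

end Nat

/-- Schreier sets satisfy `#E ≤ min E`; here the inequality is strict. -/
def strictSchreierSets (m : ℕ) : Finset (Finset ℕ) :=
  {E ∈ (Icc 1 m).powerset | ∀ x ∈ E, #E < x}

theorem filter_card_strictSchreierSets (m c : ℕ) :
    {E ∈ strictSchreierSets m | #E = c} = powersetCard c (Icc (c + 1) m) := by
  ext E
  simp only [strictSchreierSets, mem_filter, mem_powerset, mem_powersetCard, subset_iff, mem_Icc]
  constructor
  · rintro ⟨⟨hsub, hlt⟩, rfl⟩
    exact ⟨fun x hx => ⟨hlt x hx, (hsub hx).2⟩, rfl⟩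
  · rintro ⟨hsub, rfl⟩
    exact ⟨⟨fun x hx => ⟨by have := hsub hx; omega, (hsub hx).2⟩, fun x hx => (hsub hx).1⟩, rfl⟩

theorem card_strictSchreierSets (m : ℕ) : #(strictSchreierSets m) = Nat.fib (m + 1) := by
  have hcard : ∀ E ∈ strictSchreierSets m, #E ∈ range (m + 1) := fun E hE => by
    have := card_le_card (mem_powerset.mp (mem_filter.mp hE).1)
    rw [Nat.card_Icc] at this
    exact mem_range.mpr (by omega)
  rw [card_eq_sum_card_fiberwise hcard, Nat.fib_add_one_eq_sum_range_choose]
  refine sum_congr rfl fun c _ => ?_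
  rw [filter_card_strictSchreierSets, card_powersetCard, Nat.card_Icc, Nat.add_sub_add_right]

theorem setOf_eq_coe_erase_strictSchreierSets (m : ℕ) :
    {E : Finset ℕ | E ⊆ Icc 1 (m + 1) ∧ E ≠ ∅ ∧ m + 1 ∉ E ∧ ∃ h : E.Nonempty, #E < E.min' h}
      = ↑((strictSchreierSets m).erase ∅) := by
  ext E
  simp only [strictSchreierSets, lt_min'_iff, exists_prop, Set.mem_ofPred_eq, coe_erase,
    coe_filter, mem_powerset, Set.mem_sdiff, Set.mem_singleton_iff, subset_iff, mem_Icc,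
    ← nonempty_iff_ne_empty]
  constructor
  · rintro ⟨hsub, hne, htop, -, hlt⟩
    exact ⟨⟨fun x hx => ⟨(hsub hx).1, by grind⟩, hlt⟩, hne⟩
  · rintro ⟨⟨hsub, hlt⟩, hne⟩
    refine ⟨fun x hx => ⟨(hsub hx).1, by grind⟩, hne, fun htop => ?_, hne, hlt⟩
    have := hsub htop
    omega

theorem sum_Icc_sum_range_choose (m : ℕ) :
    ∑ k ∈ Icc 1 m, ∑ j ∈ range (k - 1), (m - k).choose j
      = ∑ j ∈ range m, (m - (j + 1)).choose (j + 1) := by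
  calc _ = ∑ k ∈ Ico 1 (m + 1), ∑ j ∈ range (m - 1 - (m - k)), (m - k).choose j := by
        refine sum_congr rfl fun k hk => ?_
        rw [mem_Ico] at hk
        congr 2
        omega
    _ = ∑ i ∈ range m, ∑ j ∈ range (m - 1 - i), i.choose j := by
        rw [sum_Ico_reflect (fun i => ∑ j ∈ range (m - 1 - i), i.choose j) 1 le_rfl]
        simp
    _ = ∑ j ∈ range m, ∑ i ∈ range (m - 1 - j), i.choose j :=
        sum_comm' fun i j => by simp only [mem_range]; omega
    _ = _ := sum_congr rfl fun j _ => by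
        rw [Nat.sum_range_choose_eq_choose_add_one]
        congr 1
        omega

theorem sum_range_choose_eq_fib_sub_one (m : ℕ) :
    ∑ j ∈ range m, (m - (j + 1)).choose (j + 1) = Nat.fib (m + 1) - 1 := by
  rw [Nat.fib_add_one_eq_sum_range_choose, sum_range_succ', Nat.sub_zero, Nat.choose_zero_right,
    Nat.add_sub_cancel]

theorem stmt11_general (n : ℕ) :
    {E : Finset ℕ | E ⊆ Finset.Icc 1 n ∧ E ≠ ∅ ∧ n ∉ E ∧
        ∃ h : E.Nonempty, E.card < E.min' h}.ncard
      = ∑ k ∈ Finset.Icc 1 (n - 1), ∑ j ∈ Finset.range (k - 1),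
          Nat.choose (n - k - 1) j
    ∧ (∑ k ∈ Finset.Icc 1 (n - 1), ∑ j ∈ Finset.range (k - 1),
          Nat.choose (n - k - 1) j) = Nat.fib n - 1 := by
  rcases n with _ | m
  · simp [← and_assoc]
  have hsum : ∑ k ∈ Icc 1 (m + 1 - 1), ∑ j ∈ range (k - 1), (m + 1 - k - 1).choose j
      = Nat.fib (m + 1) - 1 := by
    rw [Nat.add_sub_cancel, ← sum_range_choose_eq_fib_sub_one, ← sum_Icc_sum_range_choose]
    refine sum_congr rfl fun k _ => ?_
    rw [Nat.sub_right_comm, Nat.add_sub_cancel]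
  rw [hsum, setOf_eq_coe_erase_strictSchreierSets, Set.ncard_coe_finset,
    card_erase_of_mem, card_strictSchreierSets]
  · exact ⟨rfl, rfl⟩
  · exact mem_filter.mpr ⟨empty_mem_powerset _, by simp⟩

theorem stmt11 (n : ℕ) (hn : 1 ≤ n) :
    {E : Finset ℕ | E ⊆ Finset.Icc 1 n ∧ E ≠ ∅ ∧ n ∉ E ∧
        ∃ h : E.Nonempty, E.card < E.min' h}.ncard
      = ∑ k ∈ Finset.Icc 1 (n - 1), ∑ j ∈ Finset.range (k - 1),
          Nat.choose (n - k - 1) j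
    ∧ (∑ k ∈ Finset.Icc 1 (n - 1), ∑ j ∈ Finset.range (k - 1),
          Nat.choose (n - k - 1) j) = Nat.fib n - 1 :=
  stmt11_general n
end

section
/- For all integers k, ℓ ≥ 0, the ℓ-th term of the k-fold iterated partial sum (starting at 0) of the Fibonacci sequence equals ∑_{j=0}^{ℓ-1} C(j, ℓ-1-j+k). -/
/-- The partial sum operator sending `(a_n)` to `n ↦ ∑_{i<n} a_i`. -/
def P (a : ℕ → ℕ) : ℕ → ℕ := fun n => ∑ i ∈ Finset.range n, a i

lemma fib_eq_diag (ℓ : ℕ) :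
    Nat.fib ℓ = ∑ j ∈ Finset.range ℓ, Nat.choose j (ℓ - 1 - j) := by
  induction ℓ using Nat.twoStepInduction with
  | zero => simp
  | one => simp
  | more n ih1 ih2 =>
    rw [Nat.fib_add_two, ih1, ih2]
    rw [Finset.sum_range_succ' (fun j => Nat.choose j (n + 2 - 1 - j)) (n+1)]
    rw [Finset.sum_range_succ (fun i => Nat.choose (i+1) (n + 2 - 1 - (i+1))) n]
    have h1 : ∀ i ∈ Finset.range n, Nat.choose (i+1) (n + 2 - 1 - (i+1))
        = Nat.choose i (n - 1 - i) + Nat.choose i (n + 1 - 1 - i) := by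
      intro i hi
      simp only [Finset.mem_range] at hi
      have : n + 2 - 1 - (i+1) = (n - 1 - i) + 1 := by omega
      rw [this, Nat.choose_succ_succ, Nat.succ_eq_add_one]
      have h' : n - 1 - i + 1 = n + 1 - 1 - i := by omega
      rw [h']
    rw [Finset.sum_congr rfl h1, Finset.sum_add_distrib]
    have h2 : ∑ j ∈ Finset.range (n+1), Nat.choose j (n + 1 - 1 - j)
        = (∑ j ∈ Finset.range n, Nat.choose j (n + 1 - 1 - j)) + Nat.choose n 0 := by
      rw [Finset.sum_range_succ]
      congr 2
      omega
    rw [h2]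
    simp [Nat.choose_zero_right]
    omega

lemma gsucc (k ℓ : ℕ) :
    ∑ j ∈ Finset.range (ℓ+1), Nat.choose j (ℓ + 1 - 1 - j + (k+1)) =
      (∑ j ∈ Finset.range ℓ, Nat.choose j (ℓ - 1 - j + (k+1)))
      + ∑ j ∈ Finset.range ℓ, Nat.choose j (ℓ - 1 - j + k) := by
  rw [Finset.sum_range_succ' (fun j => Nat.choose j (ℓ + 1 - 1 - j + (k+1))) ℓ]
  have h0 : Nat.choose 0 (ℓ + 1 - 1 - 0 + (k+1)) = 0 := by
    apply Nat.choose_eq_zero_of_lt; omega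
  rw [h0, add_zero, ← Finset.sum_add_distrib]
  apply Finset.sum_congr rfl
  intro j hj
  simp only [Finset.mem_range] at hj
  have h1 : ℓ + 1 - 1 - (j+1) + (k+1) = (ℓ - 1 - j + k) + 1 := by omega
  rw [h1, Nat.choose_succ_succ, Nat.succ_eq_add_one]
  have h2 : ℓ - 1 - j + k + 1 = ℓ - 1 - j + (k + 1) := by omega
  rw [h2, add_comm]

theorem stmt17 (k ℓ : ℕ) :
    P^[k] Nat.fib ℓ = ∑ j ∈ Finset.range ℓ, Nat.choose j (ℓ - 1 - j + k) := by
  induction k generalizing ℓ with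
  | zero => simpa using fib_eq_diag ℓ
  | succ k ih =>
    rw [Function.iterate_succ_apply']
    show ∑ m ∈ Finset.range ℓ, P^[k] Nat.fib m = _
    induction ℓ with
    | zero => simp
    | succ ℓ ihl =>
      rw [Finset.sum_range_succ, ihl, ih, gsucc]
end
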